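/- arXiv:2508.12110 — 9 statements merged into one kernel-verified Lean document; each statement's English description precedes it below -/
import Mathlib

section
/- Let A ∈ ℝ^{n×n}, B ∈ ℝ^{r×r}, and X, Y, P, Q ∈ ℝ^{n×r}. If A P + P B + X = 0 and Aᵀ Q + Q Bᵀ + Y = 0, then tr(Yᵀ P) = tr(Xᵀ Q). -/
open Matrix

/-- **Proposition 1.** If `A P + P B + X = 0` and `Aᵀ Q + Q Bᵀ + Y = 0`, then
`tr(Yᵀ P) = tr(Xᵀ Q)`. -/
theorem sylvester_trace_identity {n r : ℕ}
    (A : Matrix (Fin n) (Fin n) ℝ) (B : Matrix (Fin r) (Fin r) ℝ)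
    (X Y P Q : Matrix (Fin n) (Fin r) ℝ)
    (h1 : A * P + P * B + X = 0)
    (h2 : Aᵀ * Q + Q * Bᵀ + Y = 0) :
    (Yᵀ * P).trace = (Xᵀ * Q).trace := by
  have hX : X = -(A * P + P * B) := by
    rw [add_eq_zero_iff_eq_neg] at h1; exact neg_eq_iff_eq_neg.mp h1.symm
  have hY : Y = -(Aᵀ * Q + Q * Bᵀ) := by
    rw [add_eq_zero_iff_eq_neg] at h2; exact neg_eq_iff_eq_neg.mp h2.symm
  subst hX hY
  simp only [transpose_neg, transpose_add, transpose_mul, transpose_transpose,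
    Matrix.neg_mul, Matrix.add_mul, trace_neg, trace_add]
  have e1 : (Qᵀ * A * P).trace = (Pᵀ * Aᵀ * Q).trace := by
    rw [← trace_transpose (Qᵀ * A * P)]
    simp only [transpose_mul, transpose_transpose]
    rw [← Matrix.mul_assoc]
  have e2 : (B * Qᵀ * P).trace = (Bᵀ * Pᵀ * Q).trace := by
    rw [← trace_transpose (B * Qᵀ * P)]
    simp only [transpose_mul, transpose_transpose]
    rw [trace_mul_comm, Matrix.mul_assoc, trace_mul_comm]
  rw [e1, e2]
end

section
/- Let A, M, P, Q ∈ ℝ^{n×n}, B ∈ ℝ^{n×m}, C ∈ ℝ^{1×n}, and suppose P and M are symmetric. If A P + P Aᵀ + B Bᵀ = 0 and Aᵀ Q + Q A + Cᵀ C + M P M = 0, then tr(Bᵀ Q B) = tr(C P Cᵀ) + tr(P M P M). -/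
open Matrix

/-- The squared `H₂` norm of an LQO system `(A, B, C, M)` expressed through either
Gramian: if `A P + P Aᵀ + B Bᵀ = 0` and `Aᵀ Q + Q A + Cᵀ C + M P M = 0` with `P`, `M`
symmetric, then `tr(Bᵀ Q B) = tr(C P Cᵀ) + tr(P M P M)`. -/
theorem lqo_h2_norm_two_expressions {n m : ℕ}
    (A M P Q : Matrix (Fin n) (Fin n) ℝ)
    (B : Matrix (Fin n) (Fin m) ℝ) (C : Matrix (Fin 1) (Fin n) ℝ)
    (hP : P.IsSymm) (hM : M.IsSymm)
    (h1 : A * P + P * Aᵀ + B * Bᵀ = 0)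
    (h2 : Aᵀ * Q + Q * A + Cᵀ * C + M * P * M = 0) :
    (Bᵀ * Q * B).trace = (C * P * Cᵀ).trace + (P * M * P * M).trace := by
  have t1 : (Bᵀ * Q * B).trace = (Q * (B * Bᵀ)).trace := by
    rw [Matrix.trace_mul_comm, ← Matrix.mul_assoc, Matrix.trace_mul_comm]
  have k1 : (Q * (A * P)).trace + (Q * (P * Aᵀ)).trace + (Q * (B * Bᵀ)).trace = 0 := by
    have := congrArg (fun X => (Q * X).trace) h1
    simpa [Matrix.mul_add, Matrix.trace_add] using this
  have k2 : (Aᵀ * Q * P).trace + (Q * A * P).trace + (Cᵀ * C * P).trace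
      + (M * P * M * P).trace = 0 := by
    have := congrArg (fun X => (X * P).trace) h2
    simpa [Matrix.add_mul, Matrix.trace_add] using this
  have e1 : (Q * (A * P)).trace = (Q * A * P).trace := by rw [Matrix.mul_assoc]
  have e2 : (Q * (P * Aᵀ)).trace = (Aᵀ * Q * P).trace := by
    rw [← Matrix.mul_assoc, Matrix.trace_mul_comm, ← Matrix.mul_assoc]
  have e3 : (C * P * Cᵀ).trace = (Cᵀ * C * P).trace := by
    rw [Matrix.trace_mul_comm, ← Matrix.mul_assoc]
  have e4 : (P * M * P * M).trace = (M * P * M * P).trace := by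
    rw [Matrix.trace_mul_comm, ← Matrix.mul_assoc, ← Matrix.mul_assoc]
  rw [t1, e3, e4]
  linarith
end

section
/- Let A ∈ ℝ^{n×n} and B ∈ ℝ^{r×r} both be Hurwitz, and let C ∈ ℝ^{n×r}. Then the integral X := ∫₀^∞ exp(At) C exp(Bt) dt converges, X satisfies the Sylvester equation A X + X B + C = 0, and X is the unique solution of this equation. -/
/-!
On the generalized eigenspace of `μ`, `exp (t • M) = e^{tμ} exp (t • (M - μ))` and the second
factor is a polynomial in `t`; so if every eigenvalue of `M` has negative real part, `exp (t • M)`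
decays exponentially. Hence `F X t = exp (t • A) * X * exp (t • B)` is integrable on `(0, ∞)` and
tends to `0`, and since `F' = A F + F B`, the fundamental theorem of calculus gives
`A (∫ F X) + (∫ F X) B = -X`. The Sylvester operator `X ↦ A X + X B` is thus surjective, hence
injective on the finite-dimensional space of matrices, which gives uniqueness.
-/

open Matrix MeasureTheory NormedSpace

attribute [local instance] Matrix.normedAddCommGroup Matrix.normedSpace

open Filter Asymptotics Topology Set Nat

theorem isLittleO_exp_mul_mul_pow_atTop {a b : ℝ} (hab : a < b) (l : ℕ) :
    (fun t => Real.exp (a * t) * t ^ l) =o[atTop] fun t => Real.exp (b * t) := by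
  refine ((isBigO_refl (fun t => Real.exp (a * t)) atTop).mul_isLittleO
    (isLittleO_pow_exp_pos_mul_atTop l (sub_pos.2 hab))).congr_right fun t => ?_
  rw [← Real.exp_add]
  ring_nf

theorem integrableOn_Ioi_of_isBigO_exp_neg {E : Type*} [NormedAddCommGroup E] {f : ℝ → E}
    {a b : ℝ} (hb : 0 < b) (hf : ContinuousOn f (Ici a))
    (ho : f =O[atTop] fun x => Real.exp (-b * x)) : IntegrableOn f (Ioi a) :=
  (integrableOn_Ici_iff_integrableOn_Ioi (f := f)).mp <|
    (hf.locallyIntegrableOn measurableSet_Ici).integrableOn_of_isBigO_atTop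
    ho ⟨Ioi b, Ioi_mem_atTop b, exp_neg_integrableOn_Ioi b hb⟩

theorem ContinuousLinearMap.apply_integral_Ioi_of_hasDerivAt {E : Type*} [NormedAddCommGroup E]
    [NormedSpace ℝ E] [CompleteSpace E] (L : E →L[ℝ] E) {F : ℝ → E} {a : ℝ}
    (hderiv : ∀ t ∈ Ici a, HasDerivAt F (L (F t)) t) (hint : IntegrableOn F (Ioi a))
    (hlim : Tendsto F atTop (𝓝 0)) :
    L (∫ t in Ioi a, F t) = -F a := by
  rw [← L.integral_comp_comm hint,
    integral_Ioi_of_hasDerivAt_of_tendsto' hderiv (L.integrable_comp hint) hlim, zero_sub]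

namespace Matrix

section ExpDecay

variable {ι : Type*} [Fintype ι] [DecidableEq ι]

theorem exp_smul_mulVec_eq_sum {𝕂 : Type*} [RCLike 𝕂] {N : Matrix ι ι 𝕂} {x : ι → 𝕂} {k : ℕ}
    (hk : N ^ k *ᵥ x = 0) (z : 𝕂) :
    exp (z • N) *ᵥ x = ∑ l ∈ Finset.range k, (z ^ l / l ! : 𝕂) • (N ^ l *ᵥ x) := by
  have hsum : HasSum (fun l => ((l ! : 𝕂)⁻¹ • (z • N) ^ l) *ᵥ x) (exp (z • N) *ᵥ x) :=
    -- the elementwise norm is not submultiplicative; the operator norm gives a normed algebra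
    -- with the same topology, which is all that `exp` and `HasSum` depend on
    open scoped Matrix.Norms.Operator in
    (exp_series_hasSum_exp' (𝕂 := 𝕂) (z • N)).map (mulVec.addMonoidHomLeft x)
      (continuous_id.matrix_mulVec continuous_const)
  have hterm (l : ℕ) : ((l ! : 𝕂)⁻¹ • (z • N) ^ l) *ᵥ x = (z ^ l / l ! : 𝕂) • (N ^ l *ᵥ x) := by
    rw [smul_pow, smul_smul, smul_mulVec, div_eq_inv_mul]
  simp only [hterm] at hsum
  refine hsum.unique (hasSum_sum_of_ne_finset_zero fun l hl => ?_)
  obtain ⟨j, rfl⟩ := Nat.exists_eq_add_of_le (not_lt.1 (Finset.mem_range.not.1 hl))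
  rw [add_comm, pow_add N, ← mulVec_mulVec, hk, mulVec_zero, smul_zero]

theorem exp_eq_exp_smul_exp_sub {𝕂 : Type*} [RCLike 𝕂] (M : Matrix ι ι 𝕂) (c : 𝕂) :
    exp M = exp c • exp (M - c • 1) := by
  have hc : exp (c • 1 : Matrix ι ι 𝕂) = exp c • 1 := by
    rw [← Algebra.algebraMap_eq_smul_one, ← Algebra.algebraMap_eq_smul_one]
    open scoped Matrix.Norms.Operator in exact (algebraMap_exp_comm c).symm
  conv_lhs => rw [← add_sub_cancel (c • (1 : Matrix ι ι 𝕂)) M]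
  rw [Matrix.exp_add_of_commute _ _ ((Commute.one_left _).smul_left c), hc, smul_one_mul]

theorem isBigO_exp_smul_mulVec_of_mem_maxGenEigenspace {M : Matrix ι ι ℂ} {μ : ℂ}
    {x : ι → ℂ} (hx : x ∈ Module.End.maxGenEigenspace (toLin' M) μ) {ε : ℝ} (hμ : μ.re < -ε) :
    (fun t : ℝ => exp (t • M) *ᵥ x) =O[atTop] fun t => Real.exp (-ε * t) := by
  obtain ⟨k, hk⟩ := (Module.End.mem_maxGenEigenspace _ _ _).1 hx
  set N := M - μ • 1
  replace hk : N ^ k *ᵥ x = 0 := by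
    rwa [show toLin' M - μ • 1 = toLin' N by simp [N, Module.End.one_eq_id], ← toLin'_pow,
      toLin'_apply] at hk
  have hformula (t : ℝ) : exp (t • M) *ᵥ x =
      ∑ l ∈ Finset.range k, (Complex.exp (t * μ) * (t ^ l / l ! : ℂ)) • (N ^ l *ᵥ x) := by
    rw [← Complex.coe_smul, exp_eq_exp_smul_exp_sub _ (t * μ), smul_mulVec,
      show (t : ℂ) • M - (t * μ) • 1 = (t : ℂ) • N by rw [smul_sub, smul_smul],
      exp_smul_mulVec_eq_sum hk, Finset.smul_sum, Complex.exp_eq_exp_ℂ]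
    simp only [smul_smul]
  refine (IsBigO.fun_sum fun l _ => ?_).congr_left fun t => (hformula t).symm
  have hcoeff : (fun t : ℝ => Complex.exp (t * μ) * (t ^ l / l ! : ℂ)) =O[atTop]
      fun t => Real.exp (μ.re * t) * t ^ l := by
    refine IsBigO.mul (isBigO_of_le _ fun t => ?_) (isBigO_of_le _ fun t => ?_)
    · simp [Complex.norm_exp, mul_comm]
    · rw [norm_div, norm_pow, Complex.norm_real, Complex.norm_natCast, ← norm_pow]
      exact div_le_self (norm_nonneg _) (by exact_mod_cast l.factorial_pos)
  refine ((hcoeff.trans_isLittleO (isLittleO_exp_mul_mul_pow_atTop hμ l)).isBigO.smul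
    (isBigO_const_const (N ^ l *ᵥ x) one_ne_zero atTop)).congr_right fun t => ?_
  simp

theorem isBigO_exp_smul_mulVec {M : Matrix ι ι ℂ} {ε : ℝ}
    (hM : ∀ μ ∈ spectrum ℂ M, μ.re < -ε) (x : ι → ℂ) :
    (fun t : ℝ => exp (t • M) *ᵥ x) =O[atTop] fun t => Real.exp (-ε * t) := by
  have hx : x ∈ ⨆ μ, Module.End.maxGenEigenspace (toLin' M) μ := by
    rw [Module.End.iSup_maxGenEigenspace_eq_top]; trivial
  refine Submodule.iSup_induction _
    (motive := fun x => (fun t : ℝ => exp (t • M) *ᵥ x) =O[atTop] fun t => Real.exp (-ε * t))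
    hx (fun μ y hy => ?_) (by simpa only [mulVec_zero] using isBigO_zero _ _)
    (fun y z hy hz => by simpa only [mulVec_add] using hy.add hz)
  obtain rfl | hy0 := eq_or_ne y 0
  · simpa only [mulVec_zero] using isBigO_zero _ _
  have hμ : Module.End.HasEigenvalue (toLin' M) μ :=
    Module.End.HasUnifEigenvalue.lt zero_lt_one ((Submodule.ne_bot_iff _).2 ⟨y, hy, hy0⟩)
  exact isBigO_exp_smul_mulVec_of_mem_maxGenEigenspace hy
    (hM μ (spectrum_toLin' M ▸ hμ.mem_spectrum))

theorem isBigO_exp_smul {M : Matrix ι ι ℂ} {ε : ℝ} (hM : ∀ μ ∈ spectrum ℂ M, μ.re < -ε) :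
    (fun t : ℝ => exp (t • M)) =O[atTop] fun t => Real.exp (-ε * t) := by
  refine isBigO_pi.2 fun i => isBigO_pi.2 fun j => ?_
  simpa [mulVec_single_one] using isBigO_pi.1 (isBigO_exp_smul_mulVec hM (Pi.single j 1)) i

theorem exists_pos_isBigO_exp_smul {M : Matrix ι ι ℂ} (hM : ∀ μ ∈ spectrum ℂ M, μ.re < 0) :
    ∃ ε > 0, (fun t : ℝ => exp (t • M)) =O[atTop] fun t => Real.exp (-ε * t) := by
  have hev : ∀ᶠ ε in 𝓝[>] (0 : ℝ), ∀ μ ∈ spectrum ℂ M, μ.re < -ε :=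
    (finite_spectrum M).eventually_all.2 fun μ hμ =>
      ((continuous_neg.tendsto' 0 0 neg_zero).mono_left nhdsWithin_le_nhds).eventually_const_lt
        (hM μ hμ)
  obtain ⟨ε, hεM, hε⟩ := (hev.and self_mem_nhdsWithin).exists
  exact ⟨ε, hε, isBigO_exp_smul hεM⟩

theorem exp_map_ofReal (A : Matrix ι ι ℝ) :
    (exp A).map (Complex.ofReal ·) = exp (A.map (Complex.ofReal ·)) :=
  open scoped Matrix.Norms.Operator in
  map_exp Complex.ofRealHom.mapMatrix (continuous_id.matrix_map Complex.continuous_ofReal) A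

theorem exists_pos_isBigO_exp_smul_of_real {A : Matrix ι ι ℝ}
    (hA : ∀ μ ∈ spectrum ℂ (A.map (Complex.ofReal ·)), μ.re < 0) :
    ∃ ε > 0, (fun t : ℝ => exp (t • A)) =O[atTop] fun t => Real.exp (-ε * t) := by
  obtain ⟨ε, hε, h⟩ := exists_pos_isBigO_exp_smul hA
  refine ⟨ε, hε, (h.norm_left.congr_left fun t => ?_).of_norm_left⟩
  rw [← norm_map_eq (exp (t • A)) (Complex.ofReal ·) Complex.norm_real, exp_map_ofReal,
    Matrix.map_smul _ t fun a => by simp [Complex.real_smul]]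

end ExpDecay

section Calculus

variable {l m n : Type*} [Fintype m] [Fintype n]

theorem _root_.HasDerivAt.matrix_mul {𝕜 : Type*} [NontriviallyNormedField 𝕜]
    {U : 𝕜 → Matrix l m 𝕜} {V : 𝕜 → Matrix m n 𝕜} {U' : Matrix l m 𝕜} {V' : Matrix m n 𝕜}
    {t : 𝕜} (hU : HasDerivAt U U' t) (hV : HasDerivAt V V' t) :
    HasDerivAt (fun s => U s * V s) (U' * V t + U t * V') t := by
  refine hasDerivAt_pi.2 fun i => hasDerivAt_pi.2 fun j => ?_
  simp only [mul_apply, Matrix.add_apply, ← Finset.sum_add_distrib]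
  exact HasDerivAt.fun_sum fun k _ =>
    (hasDerivAt_pi.1 (hasDerivAt_pi.1 hU i) k).fun_mul (hasDerivAt_pi.1 (hasDerivAt_pi.1 hV k) j)

variable [DecidableEq m] [DecidableEq n] {𝕂 : Type*} [RCLike 𝕂]

theorem hasDerivAt_exp_smul (A : Matrix m m 𝕂) (t : 𝕂) :
    HasDerivAt (fun s : 𝕂 => exp (s • A)) (A * exp (t • A)) t := by
  refine hasDerivAt_pi.2 fun i => hasDerivAt_pi.2 fun j => ?_
  open scoped Matrix.Norms.Operator in
  exact (LinearMap.toContinuousLinearMap (entryLinearMap 𝕂 𝕂 i j)).hasFDerivAt.comp_hasDerivAt t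
    (hasDerivAt_exp_smul_const' A t)

theorem hasDerivAt_exp_smul_mul_mul (A : Matrix m m 𝕂) (B : Matrix n n 𝕂) (X : Matrix m n 𝕂)
    (t : 𝕂) :
    HasDerivAt (fun s : 𝕂 => exp (s • A) * X * exp (s • B))
      (A * (exp (t • A) * X * exp (t • B)) + exp (t • A) * X * exp (t • B) * B) t := by
  convert ((hasDerivAt_exp_smul A t).matrix_mul (hasDerivAt_const t X)).matrix_mul
    (hasDerivAt_exp_smul B t) using 1
  rw [← ((Commute.refl B).smul_left t).exp_left.eq]
  simp only [Matrix.mul_zero, add_zero, Matrix.mul_assoc]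

end Calculus

section SupNorm

variable {m n p : Type*} [Fintype m] [Fintype n] [Fintype p]

theorem norm_mul_le_card_mul {α : Type*} [NormedRing α] (A : Matrix m n α) (B : Matrix n p α) :
    ‖A * B‖ ≤ Fintype.card n * (‖A‖ * ‖B‖) := by
  refine (norm_le_iff (by positivity)).2 fun i j => ?_
  calc ‖(A * B) i j‖ ≤ ∑ k, ‖A i k‖ * ‖B k j‖ :=
        (norm_sum_le _ _).trans (Finset.sum_le_sum fun k _ => norm_mul_le _ _)
    _ ≤ ∑ _k : n, ‖A‖ * ‖B‖ := Finset.sum_le_sum fun k _ =>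
        mul_le_mul (norm_entry_le_entrywise_sup_norm A) (norm_entry_le_entrywise_sup_norm B)
          (norm_nonneg _) (norm_nonneg _)
    _ = _ := by simp

theorem _root_.Asymptotics.IsBigO.matrix_mul {α R : Type*} [NormedRing R] {l : Filter α}
    {f : α → Matrix m n R} {g : α → Matrix n p R} {u v : α → ℝ} (hf : f =O[l] u)
    (hg : g =O[l] v) : (fun x => f x * g x) =O[l] fun x => u x * v x := by
  refine IsBigO.trans (isBigO_of_le' (c := Fintype.card n) l fun x => ?_)
    (hf.norm_left.mul hg.norm_left)
  simpa only [norm_mul, norm_norm] using norm_mul_le_card_mul (f x) (g x)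

end SupNorm

section Sylvester

variable {m n R : Type*} [Fintype m] [Fintype n]

def sylvesterMap [CommSemiring R] (A : Matrix m m R) (B : Matrix n n R) :
    Matrix m n R →ₗ[R] Matrix m n R :=
  mulLeftLinearMap n R A + mulRightLinearMap m R B

@[simp]
theorem sylvesterMap_apply [CommSemiring R] (A : Matrix m m R) (B : Matrix n n R)
    (X : Matrix m n R) : sylvesterMap A B X = A * X + X * B :=
  rfl

variable [DecidableEq m] [DecidableEq n]

theorem continuous_exp_smul_mul_mul (A : Matrix m m ℝ) (B : Matrix n n ℝ) (X : Matrix m n ℝ) :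
    Continuous fun t : ℝ => exp (t • A) * X * exp (t • B) :=
  continuous_iff_continuousAt.2 fun t => (hasDerivAt_exp_smul_mul_mul A B X t).continuousAt

theorem isBigO_exp_smul_mul_mul {A : Matrix m m ℝ} {B : Matrix n n ℝ} {a b : ℝ}
    (hA : (fun t : ℝ => exp (t • A)) =O[atTop] fun t => Real.exp (-a * t))
    (hB : (fun t : ℝ => exp (t • B)) =O[atTop] fun t => Real.exp (-b * t)) (X : Matrix m n ℝ) :
    (fun t : ℝ => exp (t • A) * X * exp (t • B)) =O[atTop] fun t => Real.exp (-(a + b) * t) :=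
  ((hA.matrix_mul (isBigO_const_const X one_ne_zero atTop)).matrix_mul hB).congr_right
    fun t => by rw [mul_one, ← Real.exp_add]; ring_nf

theorem sylvesterMap_integral_Ioi_exp_smul_mul_mul {A : Matrix m m ℝ} {B : Matrix n n ℝ}
    {X : Matrix m n ℝ} {ε : ℝ} (hε : 0 < ε)
    (hX : (fun t : ℝ => exp (t • A) * X * exp (t • B)) =O[atTop] fun t => Real.exp (-ε * t)) :
    sylvesterMap A B (∫ t : ℝ in Ioi 0, exp (t • A) * X * exp (t • B)) = -X := by
  have h := (sylvesterMap A B).toContinuousLinearMap.apply_integral_Ioi_of_hasDerivAt (a := 0)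
    (fun t _ => hasDerivAt_exp_smul_mul_mul A B X t)
    (integrableOn_Ioi_of_isBigO_exp_neg hε (continuous_exp_smul_mul_mul A B X).continuousOn hX)
    (hX.trans_tendsto (Real.tendsto_exp_comp_nhds_zero.2
      (tendsto_id.const_mul_atTop_of_neg (neg_lt_zero.2 hε))))
  rwa [zero_smul, exp_zero, zero_smul, exp_zero, Matrix.one_mul, Matrix.mul_one] at h

end Sylvester

end Matrix

/-- For Hurwitz matrices `A` and `B`, the integral `X = ∫₀^∞ exp(At) C exp(Bt) dt`
converges, satisfies the Sylvester equation `A X + X B + C = 0`, and is its unique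
solution. -/
theorem sylvester_solution_integral {n r : ℕ}
    (A : Matrix (Fin n) (Fin n) ℝ) (B : Matrix (Fin r) (Fin r) ℝ)
    (C : Matrix (Fin n) (Fin r) ℝ)
    (hA : ∀ μ ∈ spectrum ℂ (A.map (Complex.ofReal ·)), μ.re < 0)
    (hB : ∀ μ ∈ spectrum ℂ (B.map (Complex.ofReal ·)), μ.re < 0) :
    @IntegrableOn _ _ _ _ SeminormedAddGroup.toContinuousENorm
      (fun t : ℝ => NormedSpace.exp (t • A) * C * NormedSpace.exp (t • B)) (Set.Ioi 0) volume ∧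
    A * (∫ t : ℝ in Set.Ioi 0, NormedSpace.exp (t • A) * C * NormedSpace.exp (t • B)) +
      (∫ t : ℝ in Set.Ioi 0, NormedSpace.exp (t • A) * C * NormedSpace.exp (t • B)) * B + C = 0 ∧
    ∀ X' : Matrix (Fin n) (Fin r) ℝ, A * X' + X' * B + C = 0 →
      X' = ∫ t : ℝ in Set.Ioi 0, NormedSpace.exp (t • A) * C * NormedSpace.exp (t • B) := by
  obtain ⟨a, ha, hdecA⟩ := exists_pos_isBigO_exp_smul_of_real hA
  obtain ⟨b, hb, hdecB⟩ := exists_pos_isBigO_exp_smul_of_real hB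
  have hdecay := isBigO_exp_smul_mul_mul hdecA hdecB
  have hsolve (X : Matrix (Fin n) (Fin r) ℝ) :=
    sylvesterMap_integral_Ioi_exp_smul_mul_mul (add_pos ha hb) (hdecay X)
  have hinj : Function.Injective (sylvesterMap A B) :=
    LinearMap.injective_iff_surjective.2 fun X =>
      ⟨-∫ t : ℝ in Ioi 0, exp (t • A) * X * exp (t • B), by rw [map_neg, hsolve, neg_neg]⟩
  refine ⟨integrableOn_Ioi_of_isBigO_exp_neg (add_pos ha hb)
    (continuous_exp_smul_mul_mul A B C).continuousOn (hdecay C), ?_, fun X' hX' => hinj ?_⟩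
  · rw [← sylvesterMap_apply, hsolve, neg_add_cancel]
  · rw [hsolve, sylvesterMap_apply, eq_neg_of_add_eq_zero_left hX']
end

section
/- Let A ∈ ℝ^{n×n} be Hurwitz, B ∈ ℝ^{n×m}, M ∈ ℝ^{n×n} symmetric, and let P := ∫₀^∞ exp(Aτ) B Bᵀ exp(Aᵀτ) dτ be the controllability Gramian. Then ∫₀^∞ ∫₀^∞ ‖Bᵀ exp(Aᵀσ₁) M exp(Aσ₂) B‖_F² dσ₁ dσ₂ = tr(P M P M), where ‖·‖_F denotes the Frobenius norm. -/
/-!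
With `G t = exp (t A) B Bᵀ exp (t Aᵀ)`, cyclicity of the trace turns the squared Frobenius norm of
the kernel at `(σ₁, σ₂)` into `tr (G σ₁ M G σ₂ M)`, a product of a function of `σ₁` and a function
of `σ₂`; Fubini then gives `tr ((∫ G M) (∫ G M)) = tr (P M P M)`.

Integrability comes from exponential decay of `exp (t A)`. A common eigenvector of the commuting
matrices `A` and `exp A` shows that every eigenvalue of `exp A` is `exp λ` for an eigenvalue `λ` of
`A`, so the spectral radius of `exp A` is less than one, and Gelfand's formula bounds `‖(exp A)^k‖`
geometrically.
-/

open Matrix MeasureTheory NormedSpace Asymptotics Filter Set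
open scoped NNReal

theorem Module.End.exists_hasEigenvector_of_commute {K V : Type*} [Field K] [IsAlgClosed K]
    [AddCommGroup V] [Module K V] [FiniteDimensional K V] {f g : Module.End K V}
    (hfg : Commute f g) {μ : K} (hμ : g.HasEigenvalue μ) :
    ∃ c v, f.HasEigenvector c v ∧ g.HasEigenvector μ v := by
  have hmaps := Module.End.mapsTo_genEigenspace_of_comm hfg.symm μ 1
  have : Nontrivial (g.genEigenspace μ 1) := Submodule.nontrivial_iff_ne_bot.mpr hμ
  obtain ⟨c, hc⟩ := Module.End.exists_eigenvalue (f.restrict hmaps)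
  obtain ⟨⟨v, hvμ⟩, hv⟩ := hc.exists_hasEigenvector
  have hv0 : v ≠ 0 := fun h => hv.2 (by simp [h])
  refine ⟨c, v, ⟨?_, hv0⟩, ⟨hvμ, hv0⟩⟩
  rw [Module.End.mem_eigenspace_iff]
  exact congrArg Subtype.val hv.apply_eq_smul

theorem NormedSpace.exp_mul_of_mul_eq_smul {𝕂 𝔸 : Type*} [RCLike 𝕂] [NormedRing 𝔸]
    [NormedAlgebra 𝕂 𝔸] [CompleteSpace 𝔸] {a x : 𝔸} {c : 𝕂} (h : a * x = c • x) :
    exp a * x = exp c • x := by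
  have hpow (k : ℕ) : a ^ k * x = c ^ k • x := by
    induction k with
    | zero => simp
    | succ k ih => rw [pow_succ', mul_assoc, ih, mul_smul_comm, h, smul_smul, pow_succ]
  rw [exp_eq_tsum 𝕂, exp_eq_tsum 𝕂, ← (expSeries_summable' (𝕂 := 𝕂) a).tsum_mul_right]
  simp_rw [smul_mul_assoc, hpow, smul_smul]
  simpa only [smul_eq_mul] using (expSeries_summable' (𝕂 := 𝕂) c).tsum_smul_const x

theorem spectrum.eventually_norm_pow_le_of_spectralRadius_lt {A : Type*} [NormedRing A]
    [NormedAlgebra ℂ A] [CompleteSpace A] {a : A} {r : ℝ≥0} (h : spectralRadius ℂ a < r) :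
    ∀ᶠ k : ℕ in atTop, ‖a ^ k‖ ≤ r ^ k := by
  filter_upwards [(pow_nnnorm_pow_one_div_tendsto_nhds_spectralRadius a).eventually_lt_const h,
    eventually_ne_atTop 0] with k hk hk0
  rw [one_div, ← ENNReal.coe_rpow_of_nonneg _ (by positivity), ENNReal.coe_lt_coe,
    NNReal.rpow_inv_lt_iff_of_pos r.2 (by positivity), NNReal.rpow_natCast] at hk
  exact_mod_cast hk.le

theorem NormedSpace.isBigO_exp_smul_of_eventually_norm_pow_le {𝔸 : Type*} [NormedRing 𝔸]
    [NormedAlgebra ℚ 𝔸] [NormedAlgebra ℝ 𝔸] [CompleteSpace 𝔸] (a : 𝔸) {b : ℝ} (hb : 0 ≤ b)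
    (h : ∀ᶠ k : ℕ in atTop, ‖exp a ^ k‖ ≤ Real.exp (-b) ^ k) :
    (fun t : ℝ => exp (t • a)) =O[atTop] fun t => Real.exp (-b * t) := by
  have hcont : Continuous fun s : ℝ => exp (s • a) :=
    exp_continuous.comp (continuous_id.smul continuous_const)
  obtain ⟨K, hK⟩ := isCompact_Icc.exists_bound_of_continuousOn hcont.continuousOn
  obtain ⟨N, hN⟩ := eventually_atTop.mp h
  refine IsBigO.of_bound (K * Real.exp b) ?_
  filter_upwards [eventually_ge_atTop (N : ℝ)] with t ht
  have ht0 : 0 ≤ t := le_trans (Nat.cast_nonneg N) ht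
  set k := ⌊t⌋₊
  have hsplit : exp (t • a) = exp a ^ k * exp ((t - k) • a) := by
    rw [← NormedSpace.exp_nsmul, ← Nat.cast_smul_eq_nsmul ℝ,
      ← NormedSpace.exp_add_of_commute ((Commute.refl a).smul_left _ |>.smul_right _), ← add_smul,
      add_sub_cancel]
  have hfrac : t - k ∈ Icc (0 : ℝ) 1 :=
    ⟨sub_nonneg.2 (Nat.floor_le ht0), by linarith [Nat.lt_floor_add_one t]⟩
  have hK0 : 0 ≤ K := (norm_nonneg _).trans (hK _ hfrac)
  calc ‖exp (t • a)‖ ≤ ‖exp a ^ k‖ * ‖exp ((t - k) • a)‖ := hsplit ▸ norm_mul_le _ _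
    _ ≤ Real.exp (-b) ^ k * K :=
        mul_le_mul (hN k (Nat.le_floor ht)) (hK _ hfrac) (norm_nonneg _) (by positivity)
    _ ≤ Real.exp (-b * (t - 1)) * K := by
        rw [← Real.exp_nat_mul]
        refine mul_le_mul_of_nonneg_right (Real.exp_le_exp.2 ?_) hK0
        nlinarith [Nat.lt_floor_add_one t]
    _ = K * Real.exp b * ‖Real.exp (-b * t)‖ := by
        rw [Real.norm_of_nonneg (Real.exp_pos _).le, mul_sub, mul_assoc, ← Real.exp_add]
        ring_nf

def Matrix.IsHurwitz {n : Type*} [Fintype n] [DecidableEq n] (A : Matrix n n ℝ) : Prop :=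
  ∀ μ ∈ spectrum ℂ (A.map (Complex.ofReal ·)), μ.re < 0

section Frobenius

-- The Frobenius norm is submultiplicative, invariant under transposition and dominates every entry.
open scoped Matrix.Norms.Frobenius

theorem Matrix.norm_apply_le_frobenius_norm {m n α : Type*} [Fintype m] [Fintype n]
    [SeminormedAddCommGroup α] (A : Matrix m n α) (i : m) (j : n) : ‖A i j‖ ≤ ‖A‖ :=
  (PiLp.norm_apply_le (WithLp.toLp 2 fun j => A i j) j).trans
    (PiLp.norm_apply_le (WithLp.toLp 2 fun i => WithLp.toLp 2 fun j => A i j) i)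

variable {n : Type*} [Fintype n] [DecidableEq n]

theorem Matrix.exists_exp_eq_of_mem_spectrum_exp (A : Matrix n n ℂ) {μ : ℂ}
    (hμ : μ ∈ spectrum ℂ (exp A)) :
    ∃ c ∈ spectrum ℂ A, Complex.exp c = μ := by
  rw [← Matrix.spectrum_toLin', ← Module.End.hasEigenvalue_iff_mem_spectrum] at hμ
  have hcomm : Commute (toLin' A) (toLin' (exp A)) :=
    (Commute.refl A).exp_right.map Matrix.toLinAlgEquiv'
  obtain ⟨c, v, hA, hexp⟩ := Module.End.exists_hasEigenvector_of_commute hcomm hμ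
  refine ⟨c, ?_, ?_⟩
  · rw [← Matrix.spectrum_toLin', ← Module.End.hasEigenvalue_iff_mem_spectrum]
    exact Module.End.hasEigenvalue_of_hasEigenvector hA
  have key := NormedSpace.exp_mul_of_mul_eq_smul (a := A) (x := replicateCol n v) (c := c)
    (by rw [← replicateCol_mulVec, ← toLin'_apply, hA.apply_eq_smul, replicateCol_smul])
  have hμv : exp A * replicateCol n v = μ • replicateCol n v := by
    rw [← replicateCol_mulVec, ← toLin'_apply, hexp.apply_eq_smul, replicateCol_smul]
  have hcol : replicateCol n (Complex.exp c • v) = replicateCol n (μ • v) := by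
    rw [replicateCol_smul, replicateCol_smul, Complex.exp_eq_exp_ℂ]
    -- `key` is stated through the Frobenius normed ring structure: it matches `hμv` only up to defeq
    exact key.symm.trans hμv
  exact smul_left_injective ℂ hexp.2 (funext fun i => congrFun (congrFun hcol i) i)

theorem Matrix.map_ofReal_exp (A : Matrix n n ℝ) :
    (exp A).map (Complex.ofReal ·) = exp (A.map (Complex.ofReal ·)) :=
  map_exp Complex.ofRealHom.mapMatrix (continuous_id.matrix_map Complex.continuous_ofReal) A

theorem Matrix.IsHurwitz.spectralRadius_exp_lt_one {A : Matrix n n ℝ} (hA : A.IsHurwitz) :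
    spectralRadius ℂ (exp (A.map (Complex.ofReal ·))) < 1 := by
  cases isEmpty_or_nonempty n
  · simp
  refine spectrum.spectralRadius_lt_of_forall_lt _ fun μ hμ => ?_
  obtain ⟨c, hc, rfl⟩ := Matrix.exists_exp_eq_of_mem_spectrum_exp _ hμ
  rw [← NNReal.coe_lt_coe, coe_nnnorm, Complex.norm_exp, NNReal.coe_one, Real.exp_lt_one_iff]
  exact hA c hc

theorem Matrix.IsHurwitz.exists_isBigO_exp_smul {A : Matrix n n ℝ} (hA : A.IsHurwitz) :
    ∃ b > 0, (fun t : ℝ => exp (t • A)) =O[atTop] fun t => Real.exp (-b * t) := by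
  obtain ⟨r, hr, hr1⟩ := ENNReal.lt_iff_exists_nnreal_btwn.mp hA.spectralRadius_exp_lt_one
  have hr0 : 0 < (r : ℝ) := NNReal.coe_pos.2 (ENNReal.coe_pos.1 (zero_le.trans_lt hr))
  have hr1' : (r : ℝ) < 1 := by exact_mod_cast hr1
  have hb : 0 < -Real.log r := neg_pos.2 (Real.log_neg hr0 hr1')
  refine ⟨-Real.log r, hb, isBigO_exp_smul_of_eventually_norm_pow_le A hb.le ?_⟩
  filter_upwards [spectrum.eventually_norm_pow_le_of_spectralRadius_lt hr] with k hk
  rw [neg_neg, Real.exp_log hr0, ← frobenius_norm_map_eq _ (Complex.ofReal ·) Complex.norm_real]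
  have hmap : (exp A ^ k).map (Complex.ofReal ·) = exp (A.map (Complex.ofReal ·)) ^ k := by
    rw [← map_ofReal_exp]
    exact map_pow Complex.ofRealHom.mapMatrix (exp A) k
  calc _ = ‖exp (A.map (Complex.ofReal ·)) ^ k‖ := congrArg norm hmap
    _ ≤ r ^ k := mod_cast hk

theorem Matrix.IsHurwitz.integrableOn_exp_smul_mul_mul_exp_smul_transpose_apply
    {A : Matrix n n ℝ} (hA : A.IsHurwitz) (W : Matrix n n ℝ) (i j : n) :
    IntegrableOn (fun t : ℝ => (exp (t • A) * W * exp (t • Aᵀ)) i j) (Ioi 0) := by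
  obtain ⟨b, hb, hE⟩ := hA.exists_isBigO_exp_smul
  have hET : (fun t : ℝ => exp (t • Aᵀ)) =O[atTop] fun t => Real.exp (-b * t) := by
    refine (isBigO_of_le _ fun t => ?_).trans hE
    rw [← transpose_smul, exp_transpose, frobenius_norm_transpose]
  have hG := (hE.mul (isBigO_const_const W one_ne_zero atTop)).mul hET
  refine integrable_of_isBigO_exp_neg (b := 2 * b) (by positivity) ?_ ?_
  · have hexp (B : Matrix n n ℝ) : Continuous fun t : ℝ => exp (t • B) :=
      exp_continuous.comp (continuous_id.smul continuous_const)
    exact ((((hexp A).mul continuous_const).mul (hexp Aᵀ)).matrix_elem i j).continuousOn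
  · refine (isBigO_of_le _ fun t => norm_apply_le_frobenius_norm _ i j).trans
      (hG.congr_right fun t => ?_)
    rw [mul_one, ← Real.exp_add]
    ring_nf

end Frobenius

theorem Matrix.sum_sq_apply_eq_trace_transpose_mul_self {m n R : Type*} [Fintype m] [Fintype n]
    [CommSemiring R] (X : Matrix m n R) : ∑ i, ∑ j, X i j ^ 2 = trace (Xᵀ * X) := by
  simp only [trace, diag, mul_apply, transpose_apply, sq]
  exact Finset.sum_comm

theorem Matrix.sum_sq_kernel_eq_trace {m n R : Type*} [Fintype m] [Fintype n] [CommRing R]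
    (B : Matrix n m R) (E₁ E₂ M : Matrix n n R) (hM : M.IsSymm) :
    ∑ i, ∑ j, (Bᵀ * E₁ᵀ * M * E₂ * B) i j ^ 2 =
      trace (E₁ * B * Bᵀ * E₁ᵀ * M * (E₂ * B * Bᵀ * E₂ᵀ * M)) := by
  have hgram : (Bᵀ * E₁ᵀ * M * E₂ * B)ᵀ * (Bᵀ * E₁ᵀ * M * E₂ * B) =
      (Bᵀ * E₂ᵀ * M) * (E₁ * B * Bᵀ * E₁ᵀ * M * E₂ * B) := by
    simp only [transpose_mul, transpose_transpose, hM.eq, Matrix.mul_assoc]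
  rw [sum_sq_apply_eq_trace_transpose_mul_self, hgram, trace_mul_comm]
  simp only [Matrix.mul_assoc]

section Entrywise

attribute [local instance] Matrix.normedAddCommGroup Matrix.normedSpace

variable {α β m n 𝕜 : Type*} [MeasurableSpace α] [MeasurableSpace β] [Fintype n] [RCLike 𝕜]
  {μ : Measure α} {ν : Measure β}

theorem Matrix.integral_apply [Fintype m] {E : Type*} [NormedAddCommGroup E] [NormedSpace ℝ E]
    [CompleteSpace E] {f : α → Matrix m n E} (hf : ∀ i j, Integrable (fun x => f x i j) μ)
    (i : m) (j : n) : (∫ x, f x ∂μ) i j = ∫ x, f x i j ∂μ := by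
  -- with the entrywise norm, `Matrix m n E` is the normed space `m → n → E`
  change (∫ x, (fun i j => f x i j : m → n → E) ∂μ) i j = _
  rw [eval_integral (fun i => Integrable.of_eval (hf i)), eval_integral (hf i)]

theorem Matrix.integrable_mul_const_apply {f : α → Matrix m n 𝕜}
    (hf : ∀ i j, Integrable (fun x => f x i j) μ) (M : Matrix n n 𝕜) (i : m) (j : n) :
    Integrable (fun x => (f x * M) i j) μ := by
  simp only [mul_apply]
  exact integrable_finsetSum _ fun k _ => (hf i k).mul_const _

theorem Matrix.integral_mul_const [Fintype m] {f : α → Matrix m n 𝕜}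
    (hf : ∀ i j, Integrable (fun x => f x i j) μ) (M : Matrix n n 𝕜) :
    ∫ x, f x * M ∂μ = (∫ x, f x ∂μ) * M := by
  ext i j
  rw [integral_apply (integrable_mul_const_apply hf M)]
  simp only [mul_apply, integral_apply hf]
  rw [integral_finsetSum _ fun k _ => (hf i k).mul_const _]
  simp only [MeasureTheory.integral_mul_const]

theorem Matrix.integral_prod_trace_mul [SFinite μ] [SFinite ν] {f : α → Matrix n n 𝕜}
    {g : β → Matrix n n 𝕜} (hf : ∀ i j, Integrable (fun x => f x i j) μ)
    (hg : ∀ i j, Integrable (fun y => g y i j) ν) :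
    ∫ z, trace (f z.1 * g z.2) ∂μ.prod ν = trace ((∫ x, f x ∂μ) * ∫ y, g y ∂ν) := by
  have hfg (i j : n) : Integrable (fun z : α × β => f z.1 i j * g z.2 j i) (μ.prod ν) :=
    (hf i j).mul_prod (hg j i)
  simp only [trace, diag, mul_apply, integral_apply hf, integral_apply hg, ← integral_prod_mul]
  rw [integral_finsetSum _ fun i _ => integrable_finsetSum _ fun j _ => hfg i j]
  exact Finset.sum_congr rfl fun i _ => integral_finsetSum _ fun j _ => hfg i j

end Entrywise

attribute [local instance] Matrix.normedAddCommGroup Matrix.normedSpace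

/-- For a Hurwitz matrix `A`, symmetric `M` and the controllability Gramian `P`, the
squared `L₂` norm of the quadratic Volterra kernel
`h₂(σ₁,σ₂) = vec(Bᵀ exp(Aᵀσ₁) M exp(Aσ₂) B)ᵀ` equals `tr(P M P M)`; the squared
Frobenius norm is written as the sum of the squares of the entries. -/
theorem quadratic_kernel_l2_norm {n m : ℕ}
    (A M : Matrix (Fin n) (Fin n) ℝ) (B : Matrix (Fin n) (Fin m) ℝ)
    (hM : M.IsSymm)
    (hA : ∀ μ ∈ spectrum ℂ (A.map (Complex.ofReal ·)), μ.re < 0)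
    (P : Matrix (Fin n) (Fin n) ℝ)
    (hP : P = ∫ τ : ℝ in Set.Ioi 0, NormedSpace.exp (τ • A) * B * Bᵀ * NormedSpace.exp (τ • Aᵀ)) :
    (∫ σ : ℝ × ℝ in Set.Ioi (0:ℝ) ×ˢ Set.Ioi (0:ℝ),
      ∑ i, ∑ j, ((Bᵀ * NormedSpace.exp (σ.1 • Aᵀ) * M * NormedSpace.exp (σ.2 • A) * B) i j) ^ 2) =
      (P * M * P * M).trace := by
  set G := fun τ : ℝ => exp (τ • A) * B * Bᵀ * exp (τ • Aᵀ)
  have hG (i j : Fin n) : IntegrableOn (fun τ => G τ i j) (Ioi 0) := by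
    simpa only [G, Matrix.mul_assoc] using
      Matrix.IsHurwitz.integrableOn_exp_smul_mul_mul_exp_smul_transpose_apply hA (B * Bᵀ) i j
  have hexpT (τ : ℝ) : exp (τ • Aᵀ) = (exp (τ • A))ᵀ := by rw [← transpose_smul, exp_transpose]
  calc _ = ∫ σ : ℝ × ℝ, trace (G σ.1 * M * (G σ.2 * M))
        ∂(volume.restrict (Ioi 0)).prod (volume.restrict (Ioi 0)) := by
        rw [Measure.volume_eq_prod, Measure.prod_restrict]
        simp only [G, hexpT, sum_sq_kernel_eq_trace _ _ _ _ hM]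
    _ = trace ((P * M) * (P * M)) := by
        rw [integral_prod_trace_mul (integrable_mul_const_apply hG M)
          (integrable_mul_const_apply hG M), Matrix.integral_mul_const hG, ← hP]
    _ = trace (P * M * P * M) := by rw [Matrix.mul_assoc (P * M)]
end

section
/- Let A ∈ ℝ^{n×n}, let H ∈ ℝ^{n×n} be symmetric positive definite with Aᵀ H + H A negative definite, and let V ∈ ℝ^{n×r} have full column rank r. Then Vᵀ H V is symmetric positive definite (hence invertible), and the matrix Â := (Vᵀ H V)⁻¹ Vᵀ H A V is Hurwitz, i.e., every eigenvalue of Â (viewed as a complex matrix) has negative real part. -/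
open Matrix

/-!
Put `B = Vᵀ H V` and `C = Vᵀ H A V`. Congruence by the injective `V` keeps positive definiteness,
so `B` and `-Vᵀ (Aᵀ H + H A) V = -(Cᵀ + C)` are positive definite. Since `B Â = C` and `B` is
symmetric, `Âᵀ B + B Â = Cᵀ + C`, a Lyapunov inequality for `Â`. If `Â z = μ z` with `z ≠ 0`, then
`Re (z* (Âᵀ B + B Â) z) = 2 Re μ · Re (z* B z)`, and for a real matrix `S` and `z = x + i y` one has
`Re (z* S z) = xᵀ S x + yᵀ S y`, so both real parts have a definite sign and `Re μ < 0`.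
-/

section

variable {n : Type*} [Fintype n]

theorem Matrix.mulVec_injective_iff_rank_eq_card {m K : Type*} [Field K] (A : Matrix m n K) :
    Function.Injective A.mulVec ↔ A.rank = Fintype.card n := by
  rw [mulVec_injective_iff, linearIndependent_iff_card_eq_finrank_span,
    rank_eq_finrank_span_cols, eq_comm]
  rfl

theorem Matrix.re_star_dotProduct_map_ofReal_mulVec (S : Matrix n n ℝ) (z : n → ℂ) :
    (star z ⬝ᵥ S.map Complex.ofReal *ᵥ z).re =
      (fun i ↦ (z i).re) ⬝ᵥ S *ᵥ (fun i ↦ (z i).re) +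
        (fun i ↦ (z i).im) ⬝ᵥ S *ᵥ (fun i ↦ (z i).im) := by
  simp only [dotProduct, mulVec, Finset.mul_sum, Complex.re_sum, ← Finset.sum_add_distrib]
  refine Finset.sum_congr rfl fun i _ ↦ Finset.sum_congr rfl fun j _ ↦ ?_
  simp only [Pi.star_apply, Complex.star_def, map_apply, Complex.mul_re, Complex.conj_re,
    Complex.conj_im, Complex.ofReal_re, Complex.ofReal_im, Complex.im_ofReal_mul]
  ring

theorem Matrix.PosDef.re_star_dotProduct_map_ofReal_mulVec_pos {S : Matrix n n ℝ}
    (hS : S.PosDef) {z : n → ℂ} (hz : z ≠ 0) :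
    0 < (star z ⬝ᵥ S.map Complex.ofReal *ᵥ z).re := by
  have hpos {x : n → ℝ} (hx : x ≠ 0) : 0 < x ⬝ᵥ S *ᵥ x := by
    simpa only [star_trivial] using hS.dotProduct_mulVec_pos hx
  have hnonneg (x : n → ℝ) : 0 ≤ x ⬝ᵥ S *ᵥ x := by
    simpa only [star_trivial] using hS.posSemidef.dotProduct_mulVec_nonneg x
  have hre_or_im : (fun i ↦ (z i).re) ≠ 0 ∨ (fun i ↦ (z i).im) ≠ 0 := by
    by_contra! h
    exact hz (funext fun i ↦ Complex.ext (congrFun h.1 i) (congrFun h.2 i))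
  rw [re_star_dotProduct_map_ofReal_mulVec]
  rcases hre_or_im with h | h
  · exact add_pos_of_pos_of_nonneg (hpos h) (hnonneg _)
  · exact add_pos_of_nonneg_of_pos (hnonneg _) (hpos h)

theorem Matrix.re_lt_zero_of_mem_spectrum_of_lyapunov [DecidableEq n] {M B : Matrix n n ℝ}
    (hB : B.PosDef) (hL : (-(Mᵀ * B + B * M)).PosDef) {μ : ℂ}
    (hμ : μ ∈ spectrum ℂ (M.map Complex.ofReal)) : μ.re < 0 := by
  set Mc := M.map Complex.ofReal
  set Bc := B.map Complex.ofReal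
  rw [← spectrum_toLin', ← Module.End.hasEigenvalue_iff_mem_spectrum] at hμ
  obtain ⟨z, hz⟩ := hμ.exists_hasEigenvector
  have hMz : Mc *ᵥ z = μ • z := hz.apply_eq_smul
  have hquad : star z ⬝ᵥ (-(Mᵀ * B + B * M)).map Complex.ofReal *ᵥ z =
      -(star μ * (star z ⬝ᵥ Bc *ᵥ z) + μ * (star z ⬝ᵥ Bc *ᵥ z)) := by
    have hmap : (-(Mᵀ * B + B * M)).map Complex.ofReal = -(Mcᴴ * Bc + Bc * Mc) := by
      ext i j
      simp [Mc, Bc, mul_apply]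
    rw [hmap, neg_mulVec, add_mulVec, ← mulVec_mulVec, ← mulVec_mulVec, hMz, dotProduct_neg,
      dotProduct_add, mulVec_smul, dotProduct_smul, dotProduct_mulVec (star z) Mcᴴ,
      ← star_mulVec, hMz, star_smul, smul_dotProduct, smul_eq_mul, smul_eq_mul]
  have hLz := hL.re_star_dotProduct_map_ofReal_mulVec_pos hz.2
  have hBz := hB.re_star_dotProduct_map_ofReal_mulVec_pos hz.2
  rw [hquad] at hLz
  simp only [Complex.neg_re, Complex.add_re, Complex.mul_re, Complex.star_def, Complex.conj_re,
    Complex.conj_im] at hLz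
  have hμq : μ.re * (star z ⬝ᵥ Bc *ᵥ z).re < 0 := by linarith
  exact neg_of_mul_neg_left hμq hBz.le

end

theorem projected_matrix_hurwitz_general {n r : ℕ}
    (A : Matrix (Fin n) (Fin n) ℝ)
    (H : Matrix (Fin n) (Fin n) ℝ) (hHpos : H.PosDef)
    (hneg : (-(Aᵀ * H + H * A)).PosDef)
    (V : Matrix (Fin n) (Fin r) ℝ) (hV : V.rank = r) :
    (Vᵀ * H * V).IsSymm ∧ (Vᵀ * H * V).PosDef ∧ IsUnit (Vᵀ * H * V) ∧
    ∀ μ ∈ spectrum ℂ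
      (((Vᵀ * H * V)⁻¹ * Vᵀ * H * A * V).map (Complex.ofReal ·)), μ.re < 0 := by
  have hVinj : Function.Injective V.mulVec :=
    (mulVec_injective_iff_rank_eq_card V).2 (by rw [hV, Fintype.card_fin])
  have congr_posDef {S : Matrix (Fin n) (Fin n) ℝ} (hS : S.PosDef) : (Vᵀ * S * V).PosDef := by
    simpa only [conjTranspose_eq_transpose_of_trivial] using hS.conjTranspose_mul_mul_same hVinj
  set B := Vᵀ * H * V
  set C := Vᵀ * H * A * V
  set Â := B⁻¹ * Vᵀ * H * A * V
  have hB : B.PosDef := congr_posDef hHpos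
  have hBsymm : B.IsSymm := isHermitian_iff_isSymm.1 hB.isHermitian
  refine ⟨hBsymm, hB, hB.isUnit, fun μ hμ ↦ re_lt_zero_of_mem_spectrum_of_lyapunov hB ?_ hμ⟩
  have hBÂ : B * Â = C := by
    rw [show Â = B⁻¹ * C by simp only [Â, C, Matrix.mul_assoc],
      mul_nonsing_inv_cancel_left _ _ ((isUnit_iff_isUnit_det B).1 hB.isUnit)]
  have hÂB : Âᵀ * B = Cᵀ := by rw [← hBÂ, transpose_mul B Â, hBsymm.eq]
  have hCT : Cᵀ = Vᵀ * Aᵀ * H * V := by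
    simp only [C, transpose_mul, transpose_transpose,
      (isHermitian_iff_isSymm.1 hHpos.isHermitian).eq, Matrix.mul_assoc]
  rw [hÂB, hBÂ, hCT]
  simpa only [C, Matrix.mul_neg, Matrix.neg_mul, Matrix.mul_add, Matrix.add_mul, Matrix.mul_assoc]
    using congr_posDef hneg

/-- If `H` is symmetric positive definite with `Aᵀ H + H A` negative definite and `V` has
full column rank `r`, then `Vᵀ H V` is symmetric positive definite (hence invertible) and
the reduced matrix `Â = (Vᵀ H V)⁻¹ Vᵀ H A V` is Hurwitz. -/
theorem projected_matrix_hurwitz {n r : ℕ}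
    (A : Matrix (Fin n) (Fin n) ℝ)
    (H : Matrix (Fin n) (Fin n) ℝ) (hHsymm : H.IsSymm) (hHpos : H.PosDef)
    (hneg : (-(Aᵀ * H + H * A)).PosDef)
    (V : Matrix (Fin n) (Fin r) ℝ) (hV : V.rank = r) :
    (Vᵀ * H * V).IsSymm ∧ (Vᵀ * H * V).PosDef ∧ IsUnit (Vᵀ * H * V) ∧
    ∀ μ ∈ spectrum ℂ
      (((Vᵀ * H * V)⁻¹ * Vᵀ * H * A * V).map (Complex.ofReal ·)), μ.re < 0 :=
  projected_matrix_hurwitz_general A H hHpos hneg V hV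
end

section
/- Let A, M ∈ ℝ^{n×n} with M symmetric, Â, M̂ ∈ ℝ^{r×r} with M̂ symmetric, B ∈ ℝ^{n×m}, B̂ ∈ ℝ^{r×m}, V ∈ ℝ^{n×r}, and X, Y, R₁, Δ_W, Δ_X, Δ_Y ∈ ℝ^{n×r}. Suppose: A X + X Âᵀ + B B̂ᵀ = 0; Aᵀ Δ_Y + Δ_Y Â + Y Δ_Wᵀ A V − M Δ_X M̂ = 0; A Δ_X + Δ_X Âᵀ + X Vᵀ Aᵀ Δ_W + B Bᵀ Δ_W = 0; and Aᵀ R₁ + R₁ Â + M X M̂ = 0. Then tr(B̂ Bᵀ Δ_Y) = tr(Δ_Wᵀ (A V Xᵀ (Y − R₁) − B Bᵀ R₁)). -/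
open Matrix

/-- transpose trick: trace (P*Q) = trace (Qᵀ*Pᵀ) -/
private lemma ttr {k l : ℕ} (P : Matrix (Fin k) (Fin l) ℝ) (Q : Matrix (Fin l) (Fin k) ℝ) :
    (P * Q).trace = (Qᵀ * Pᵀ).trace := by
  rw [← Matrix.trace_transpose (P * Q), Matrix.transpose_mul]

/-- Trace identity from the proof of Theorem 1: with `Δ_Y`, `Δ_X` the first-order
differentials of the cross Gramians `Y`, `X` with respect to a perturbation `Δ_W`, and
`R₁` solving `Aᵀ R₁ + R₁ Â + M X M̂ = 0`, one has
`tr(B̂ Bᵀ Δ_Y) = tr(Δ_Wᵀ (A V Xᵀ (Y − R₁) − B Bᵀ R₁))`. -/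
theorem trace_identity_DeltaY {n r m : ℕ}
    (A M : Matrix (Fin n) (Fin n) ℝ) (hM : M.IsSymm)
    (Ahat Mhat : Matrix (Fin r) (Fin r) ℝ) (hMhat : Mhat.IsSymm)
    (B : Matrix (Fin n) (Fin m) ℝ) (Bhat : Matrix (Fin r) (Fin m) ℝ)
    (V : Matrix (Fin n) (Fin r) ℝ)
    (X Y R₁ DW DX DY : Matrix (Fin n) (Fin r) ℝ)
    (hX : A * X + X * Ahatᵀ + B * Bhatᵀ = 0)
    (hDY : Aᵀ * DY + DY * Ahat + Y * DWᵀ * A * V - M * DX * Mhat = 0)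
    (hDX : A * DX + DX * Ahatᵀ + X * Vᵀ * Aᵀ * DW + B * Bᵀ * DW = 0)
    (hR₁ : Aᵀ * R₁ + R₁ * Ahat + M * X * Mhat = 0) :
    (Bhat * Bᵀ * DY).trace =
      (DWᵀ * (A * V * Xᵀ * (Y - R₁) - B * Bᵀ * R₁)).trace := by
  -- canonical scalar quantities
  set a := (Xᵀ * (Aᵀ * DY)).trace with ha
  set b := (Xᵀ * (DY * Ahat)).trace with hb
  set c := (Bhat * Bᵀ * DY).trace with hc
  set d := (DWᵀ * (A * V * Xᵀ * Y)).trace with hd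
  set e := (DXᵀ * (M * X * Mhat)).trace with he
  set f := (R₁ᵀ * (A * DX)).trace with hf
  set g := (R₁ᵀ * (DX * Ahatᵀ)).trace with hg
  set h := (DWᵀ * (A * V * Xᵀ * R₁)).trace with hh
  set i := (DWᵀ * (B * Bᵀ * R₁)).trace with hi
  -- Equation (1): a + b + c = 0
  have E1 : a + b + c = 0 := by
    have e0 : (DYᵀ * (A * X + X * Ahatᵀ + B * Bhatᵀ)).trace = 0 := by
      rw [hX, Matrix.mul_zero, Matrix.trace_zero]
    simp only [Matrix.mul_add, Matrix.trace_add] at e0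
    have t1 : (DYᵀ * (A * X)).trace = a := by
      rw [ttr, ha]; simp [Matrix.mul_assoc]
    have t2 : (DYᵀ * (X * Ahatᵀ)).trace = b := by
      rw [ttr, hb]
      calc ((X * Ahatᵀ)ᵀ * DYᵀᵀ).trace
          = (Ahat * (Xᵀ * DY)).trace := by simp [Matrix.mul_assoc]
        _ = ((Xᵀ * DY) * Ahat).trace := Matrix.trace_mul_comm _ _
        _ = (Xᵀ * (DY * Ahat)).trace := by simp [Matrix.mul_assoc]
    have t3 : (DYᵀ * (B * Bhatᵀ)).trace = c := by
      rw [ttr, hc]; simp [Matrix.mul_assoc]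
    rw [t1, t2, t3] at e0; exact e0
  -- Equation (2): a + b + d - e = 0
  have E2 : a + b + d - e = 0 := by
    have e0 : (Xᵀ * (Aᵀ * DY + DY * Ahat + Y * DWᵀ * A * V - M * DX * Mhat)).trace = 0 := by
      rw [hDY, Matrix.mul_zero, Matrix.trace_zero]
    simp only [Matrix.mul_add, Matrix.mul_sub, Matrix.trace_add, Matrix.trace_sub] at e0
    have t3 : (Xᵀ * (Y * DWᵀ * A * V)).trace = d := by
      rw [hd]
      calc (Xᵀ * (Y * DWᵀ * A * V)).trace
          = ((Xᵀ * Y * DWᵀ) * (A * V)).trace := by simp [Matrix.mul_assoc]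
        _ = ((A * V) * (Xᵀ * Y * DWᵀ)).trace := Matrix.trace_mul_comm _ _
        _ = ((A * V * Xᵀ * Y) * DWᵀ).trace := by simp [Matrix.mul_assoc]
        _ = (DWᵀ * (A * V * Xᵀ * Y)).trace := Matrix.trace_mul_comm _ _
    have t4 : (Xᵀ * (M * DX * Mhat)).trace = e := by
      rw [ttr, he]
      calc ((M * DX * Mhat)ᵀ * Xᵀᵀ).trace
          = (Mhat * (DXᵀ * (M * X))).trace := by simp [Matrix.mul_assoc, hM.eq, hMhat.eq]
        _ = ((DXᵀ * (M * X)) * Mhat).trace := Matrix.trace_mul_comm _ _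
        _ = (DXᵀ * (M * X * Mhat)).trace := by simp [Matrix.mul_assoc]
    rw [t3, t4] at e0
    linarith [e0]
  -- Equation (4): f + g + e = 0
  have E4 : f + g + e = 0 := by
    have e0 : (DXᵀ * (Aᵀ * R₁ + R₁ * Ahat + M * X * Mhat)).trace = 0 := by
      rw [hR₁, Matrix.mul_zero, Matrix.trace_zero]
    simp only [Matrix.mul_add, Matrix.trace_add] at e0
    have t1 : (DXᵀ * (Aᵀ * R₁)).trace = f := by
      rw [ttr, hf]; simp [Matrix.mul_assoc]
    have t2 : (DXᵀ * (R₁ * Ahat)).trace = g := by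
      rw [ttr, hg]
      calc ((R₁ * Ahat)ᵀ * DXᵀᵀ).trace
          = (Ahatᵀ * (R₁ᵀ * DX)).trace := by simp [Matrix.mul_assoc]
        _ = ((R₁ᵀ * DX) * Ahatᵀ).trace := Matrix.trace_mul_comm _ _
        _ = (R₁ᵀ * (DX * Ahatᵀ)).trace := by simp [Matrix.mul_assoc]
    rw [t1, t2] at e0; exact e0
  -- Equation (3): f + g + h + i = 0
  have E3 : f + g + h + i = 0 := by
    have e0 : (R₁ᵀ * (A * DX + DX * Ahatᵀ + X * Vᵀ * Aᵀ * DW + B * Bᵀ * DW)).trace = 0 := by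
      rw [hDX, Matrix.mul_zero, Matrix.trace_zero]
    simp only [Matrix.mul_add, Matrix.trace_add] at e0
    have t3 : (R₁ᵀ * (X * Vᵀ * Aᵀ * DW)).trace = h := by
      rw [ttr, hh]; simp [Matrix.mul_assoc]
    have t4 : (R₁ᵀ * (B * Bᵀ * DW)).trace = i := by
      rw [ttr, hi]; simp [Matrix.mul_assoc]
    rw [t3, t4] at e0; exact e0
  -- assemble
  have goalR : (DWᵀ * (A * V * Xᵀ * (Y - R₁) - B * Bᵀ * R₁)).trace = d - h - i := by
    rw [hd, hh, hi]
    simp only [Matrix.mul_sub, Matrix.sub_mul, Matrix.trace_sub]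
  rw [goalR]; linarith
end

section
/- Let A ∈ ℝ^{n×n}, Â, M̂, P̂, Q̂, R₂, Δ_P̂, Δ_Q̂ ∈ ℝ^{r×r} with M̂, P̂, Q̂, R₂ symmetric, B ∈ ℝ^{n×m}, B̂ ∈ ℝ^{r×m}, V ∈ ℝ^{n×r}, Δ_W ∈ ℝ^{n×r}. Suppose: Â P̂ + P̂ Âᵀ + B̂ B̂ᵀ = 0; Âᵀ Δ_Q̂ + Δ_Q̂ Â + Vᵀ Aᵀ Δ_W Q̂ + Q̂ Δ_Wᵀ A V + M̂ Δ_P̂ M̂ = 0; Â Δ_P̂ + Δ_P̂ Âᵀ + Δ_Wᵀ A V P̂ + P̂ Vᵀ Aᵀ Δ_W + Δ_Wᵀ B B̂ᵀ + B̂ Bᵀ Δ_W = 0; and Âᵀ R₂ + R₂ Â + M̂ P̂ M̂ = 0. Then tr(B̂ B̂ᵀ Δ_Q̂) = 2 tr(Δ_Wᵀ (A V P̂ (Q̂ + R₂) + B B̂ᵀ R₂)). -/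
open Matrix

/-- Trace identity from the proof of Theorem 1: with `Δ_Q̂`, `Δ_P̂` the first-order
differentials of the reduced Gramians `Q̂`, `P̂` with respect to a perturbation `Δ_W`,
and `R₂` solving `Âᵀ R₂ + R₂ Â + M̂ P̂ M̂ = 0`, one has
`tr(B̂ B̂ᵀ Δ_Q̂) = 2 tr(Δ_Wᵀ (A V P̂ (Q̂ + R₂) + B B̂ᵀ R₂))`. -/
theorem trace_identity_DeltaQhat {n r m : ℕ}
    (A : Matrix (Fin n) (Fin n) ℝ)
    (Ahat Mhat Phat Qhat R₂ DP DQ : Matrix (Fin r) (Fin r) ℝ)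
    (hMhat : Mhat.IsSymm) (hPhat : Phat.IsSymm) (hQhat : Qhat.IsSymm)
    (hR₂symm : R₂.IsSymm)
    (B : Matrix (Fin n) (Fin m) ℝ) (Bhat : Matrix (Fin r) (Fin m) ℝ)
    (V DW : Matrix (Fin n) (Fin r) ℝ)
    (hPhateq : Ahat * Phat + Phat * Ahatᵀ + Bhat * Bhatᵀ = 0)
    (hDQ : Ahatᵀ * DQ + DQ * Ahat + Vᵀ * Aᵀ * DW * Qhat + Qhat * DWᵀ * A * V +
      Mhat * DP * Mhat = 0)
    (hDP : Ahat * DP + DP * Ahatᵀ + DWᵀ * A * V * Phat + Phat * Vᵀ * Aᵀ * DW +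
      DWᵀ * B * Bhatᵀ + Bhat * Bᵀ * DW = 0)
    (hR₂ : Ahatᵀ * R₂ + R₂ * Ahat + Mhat * Phat * Mhat = 0) :
    (Bhat * Bhatᵀ * DQ).trace =
      2 * (DWᵀ * (A * V * Phat * (Qhat + R₂) + B * Bhatᵀ * R₂)).trace := by
  -- scalar equations from the four matrix equations
  have e1 : (Ahat*Phat*DQ).trace + (Phat*Ahatᵀ*DQ).trace + (Bhat*Bhatᵀ*DQ).trace = 0 := by
    have h := congrArg (fun X => (X * DQ).trace) hPhateq
    simpa [add_mul, Matrix.trace_add] using h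
  have e2 : (Phat*(Ahatᵀ*DQ)).trace + (Phat*(DQ*Ahat)).trace
      + (Phat*(Vᵀ*Aᵀ*DW*Qhat)).trace + (Phat*(Qhat*DWᵀ*A*V)).trace
      + (Phat*(Mhat*DP*Mhat)).trace = 0 := by
    have h := congrArg (fun X => (Phat * X).trace) hDQ
    simpa [mul_add, Matrix.trace_add] using h
  have e3 : (R₂*(Ahat*DP)).trace + (R₂*(DP*Ahatᵀ)).trace
      + (R₂*(DWᵀ*A*V*Phat)).trace + (R₂*(Phat*Vᵀ*Aᵀ*DW)).trace
      + (R₂*(DWᵀ*B*Bhatᵀ)).trace + (R₂*(Bhat*Bᵀ*DW)).trace = 0 := by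
    have h := congrArg (fun X => (R₂ * X).trace) hDP
    simpa [mul_add, Matrix.trace_add] using h
  have e4 : (DP*(Ahatᵀ*R₂)).trace + (DP*(R₂*Ahat)).trace
      + (DP*(Mhat*Phat*Mhat)).trace = 0 := by
    have h := congrArg (fun X => (DP * X).trace) hR₂
    simpa [mul_add, Matrix.trace_add] using h
  -- cyclic / transpose trace identities
  have ia : (Ahat*Phat*DQ).trace = (Phat*(DQ*Ahat)).trace := by
    rw [Matrix.mul_assoc, Matrix.trace_mul_comm, Matrix.mul_assoc]
  have ib : (Phat*Ahatᵀ*DQ).trace = (Phat*(Ahatᵀ*DQ)).trace := by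
    rw [Matrix.mul_assoc]
  have ic : (Phat*(Vᵀ*Aᵀ*DW*Qhat)).trace = (DWᵀ*(A*V*Phat*Qhat)).trace := by
    rw [← Matrix.trace_transpose (Phat * _)]
    simp [Matrix.transpose_mul, hPhat.eq, hQhat.eq, Matrix.mul_assoc]
    rw [Matrix.trace_mul_comm]; simp [Matrix.mul_assoc]
  have id' : (Phat*(Qhat*DWᵀ*A*V)).trace = (DWᵀ*(A*V*Phat*Qhat)).trace := by
    rw [Matrix.trace_mul_comm Phat]
    rw [show Qhat*DWᵀ*A*V*Phat = Qhat*(DWᵀ*(A*V*Phat)) by simp [Matrix.mul_assoc]]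
    rw [Matrix.trace_mul_comm Qhat]; simp [Matrix.mul_assoc]
  have ie : (Phat*(Mhat*DP*Mhat)).trace = (DP*(Mhat*Phat*Mhat)).trace := by
    rw [show Phat*(Mhat*DP*Mhat) = (Phat*Mhat)*(DP*Mhat) by simp [Matrix.mul_assoc]]
    rw [Matrix.trace_mul_comm]; simp [Matrix.mul_assoc]
  have if' : (R₂*(Ahat*DP)).trace = (DP*(R₂*Ahat)).trace := by
    rw [show R₂*(Ahat*DP) = (R₂*Ahat)*DP by simp [Matrix.mul_assoc]]
    rw [Matrix.trace_mul_comm]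
  have ig : (R₂*(DP*Ahatᵀ)).trace = (DP*(Ahatᵀ*R₂)).trace := by
    rw [Matrix.trace_mul_comm]; simp [Matrix.mul_assoc]
  have ih : (R₂*(DWᵀ*A*V*Phat)).trace = (DWᵀ*(A*V*Phat*R₂)).trace := by
    rw [Matrix.trace_mul_comm]; simp [Matrix.mul_assoc]
  have ii : (R₂*(Phat*Vᵀ*Aᵀ*DW)).trace = (DWᵀ*(A*V*Phat*R₂)).trace := by
    rw [← Matrix.trace_transpose (R₂ * _)]
    simp [Matrix.transpose_mul, hPhat.eq, hR₂symm.eq, Matrix.mul_assoc]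
  have ij : (R₂*(DWᵀ*B*Bhatᵀ)).trace = (DWᵀ*(B*Bhatᵀ*R₂)).trace := by
    rw [Matrix.trace_mul_comm]; simp [Matrix.mul_assoc]
  have ik : (R₂*(Bhat*Bᵀ*DW)).trace = (DWᵀ*(B*Bhatᵀ*R₂)).trace := by
    rw [← Matrix.trace_transpose (R₂ * _)]
    simp [Matrix.transpose_mul, hR₂symm.eq, Matrix.mul_assoc]
  have goal' : (DWᵀ * (A * V * Phat * (Qhat + R₂) + B * Bhatᵀ * R₂)).trace
      = (DWᵀ*(A*V*Phat*Qhat)).trace + (DWᵀ*(A*V*Phat*R₂)).trace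
        + (DWᵀ*(B*Bhatᵀ*R₂)).trace := by
    simp [Matrix.mul_add, Matrix.trace_add]
  rw [goal']
  rw [ia, ib] at e1
  rw [ic, id', ie] at e2
  rw [if', ig, ih, ii, ij, ik] at e3
  linarith [e1, e2, e3, e4]
end

section
/- Let A, M ∈ ℝ^{n×n} with M symmetric, B ∈ ℝ^{n×m}, C ∈ ℝ^{1×n}, W, V ∈ ℝ^{n×r}, and set Â := Wᵀ A V, B̂ := Wᵀ B, Ĉ := C V, M̂ := Vᵀ M V. Let X, Y, R₁, Δ_W, Δ_X, Δ_Y ∈ ℝ^{n×r} and P̂, Q̂, R₂, Δ_P̂, Δ_Q̂ ∈ ℝ^{r×r} with P̂, Q̂, R₂ symmetric, satisfying: A X + X Âᵀ + B B̂ᵀ = 0; Â P̂ + P̂ Âᵀ + B̂ B̂ᵀ = 0; Aᵀ R₁ + R₁ Â + M X M̂ = 0; Âᵀ R₂ + R₂ Â + M̂ P̂ M̂ = 0; Aᵀ Δ_Y + Δ_Y Â + Y Δ_Wᵀ A V − M Δ_X M̂ = 0; Âᵀ Δ_Q̂ + Δ_Q̂ Â + Vᵀ Aᵀ Δ_W Q̂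 + Q̂ Δ_Wᵀ A V + M̂ Δ_P̂ M̂ = 0; A Δ_X + Δ_X Âᵀ + X Vᵀ Aᵀ Δ_W + B Bᵀ Δ_W = 0; Â Δ_P̂ + Δ_P̂ Âᵀ + Δ_Wᵀ A V P̂ + P̂ Vᵀ Aᵀ Δ_W + Δ_Wᵀ B B̂ᵀ + B̂ Bᵀ Δ_W = 0. Set K := Y − R₁ and L := Q̂ + R₂. Then 2 tr(Δ_Wᵀ B Bᵀ (Y + W Q̂)) + 2 tr(B̂ Bᵀ Δ_Y) + tr(B̂ B̂ᵀ Δ_Q̂) = 2 tr(Δ_Wᵀ (A V (Xᵀ K + P̂ L) + B Bᵀ (K + W L))). -/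
open Matrix

lemma sylv_pair_t2' {α β : Type*} [Fintype α] [Fintype β]
    (Ah : Matrix β β ℝ) (X Z : Matrix α β ℝ) :
    (Zᵀ * (X * Ahᵀ)).trace = (Xᵀ * (Z * Ah)).trace := by
  rw [← Matrix.trace_transpose (Xᵀ * (Z * Ah)), Matrix.transpose_mul, Matrix.transpose_mul,
    Matrix.transpose_transpose, Matrix.trace_mul_comm,
    Matrix.trace_mul_cycle X Ahᵀ Zᵀ, Matrix.trace_mul_cycle Zᵀ X Ahᵀ]

/-- Pairing of two Sylvester equations:
if `A X + X Âᵀ + E = 0` and `Aᵀ Z + Z Â + F = 0` then `tr(Zᵀ E) = tr(Xᵀ F)`. -/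
lemma sylv_pair {α β : Type*} [Fintype α] [Fintype β]
    (A : Matrix α α ℝ) (Ah : Matrix β β ℝ) (X E Z F : Matrix α β ℝ)
    (h1 : A * X + X * Ahᵀ + E = 0) (h2 : Aᵀ * Z + Z * Ah + F = 0) :
    (Zᵀ * E).trace = (Xᵀ * F).trace := by
  have hE : E = -(A * X + X * Ahᵀ) := eq_neg_of_add_eq_zero_right h1
  have hF : F = -(Aᵀ * Z + Z * Ah) := eq_neg_of_add_eq_zero_right h2
  subst hE hF
  have t1 : (Zᵀ * (A * X)).trace = (Xᵀ * (Aᵀ * Z)).trace := by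
    rw [← Matrix.trace_transpose (Xᵀ * (Aᵀ * Z))]
    simp [Matrix.transpose_mul, Matrix.mul_assoc]
  have t2 := sylv_pair_t2' Ah X Z
  simp only [Matrix.mul_neg, Matrix.trace_neg, Matrix.mul_add, Matrix.trace_add, t1, t2]

/-- **Theorem 1 (algebraic content).** The first-order variation of the `H₂` error cost
`J₁(W,V)` with respect to a perturbation `Δ_W` of the left projection matrix equals
`tr(Δ_Wᵀ J_{1,W})` with `J_{1,W} = 2(A V (Xᵀ K + P̂ L) + B Bᵀ (K + W L))`, where
`K = Y − R₁` and `L = Q̂ + R₂`. -/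
theorem partial_derivative_J1_W {n r m : ℕ}
    (A M : Matrix (Fin n) (Fin n) ℝ) (hM : M.IsSymm)
    (B : Matrix (Fin n) (Fin m) ℝ) (C : Matrix (Fin 1) (Fin n) ℝ)
    (W V : Matrix (Fin n) (Fin r) ℝ)
    (Ahat : Matrix (Fin r) (Fin r) ℝ) (Bhat : Matrix (Fin r) (Fin m) ℝ)
    (Chat : Matrix (Fin 1) (Fin r) ℝ) (Mhat : Matrix (Fin r) (Fin r) ℝ)
    (hAhat : Ahat = Wᵀ * A * V) (hBhat : Bhat = Wᵀ * B)
    (hChat : Chat = C * V) (hMhat : Mhat = Vᵀ * M * V)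
    (X Y R₁ DW DX DY : Matrix (Fin n) (Fin r) ℝ)
    (Phat Qhat R₂ DP DQ : Matrix (Fin r) (Fin r) ℝ)
    (hPhatsymm : Phat.IsSymm) (hQhatsymm : Qhat.IsSymm) (hR₂symm : R₂.IsSymm)
    (hX : A * X + X * Ahatᵀ + B * Bhatᵀ = 0)
    (hPhat : Ahat * Phat + Phat * Ahatᵀ + Bhat * Bhatᵀ = 0)
    (hR₁ : Aᵀ * R₁ + R₁ * Ahat + M * X * Mhat = 0)
    (hR₂ : Ahatᵀ * R₂ + R₂ * Ahat + Mhat * Phat * Mhat = 0)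
    (hDY : Aᵀ * DY + DY * Ahat + Y * DWᵀ * A * V - M * DX * Mhat = 0)
    (hDQ : Ahatᵀ * DQ + DQ * Ahat + Vᵀ * Aᵀ * DW * Qhat + Qhat * DWᵀ * A * V +
      Mhat * DP * Mhat = 0)
    (hDX : A * DX + DX * Ahatᵀ + X * Vᵀ * Aᵀ * DW + B * Bᵀ * DW = 0)
    (hDP : Ahat * DP + DP * Ahatᵀ + DWᵀ * A * V * Phat + Phat * Vᵀ * Aᵀ * DW +
      DWᵀ * B * Bhatᵀ + Bhat * Bᵀ * DW = 0)
    (K : Matrix (Fin n) (Fin r) ℝ) (hK : K = Y - R₁)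
    (L : Matrix (Fin r) (Fin r) ℝ) (hL : L = Qhat + R₂) :
    2 * (DWᵀ * (B * Bᵀ * (Y + W * Qhat))).trace +
      2 * (Bhat * Bᵀ * DY).trace + (Bhat * Bhatᵀ * DQ).trace =
    2 * (DWᵀ * (A * V * (Xᵀ * K + Phat * L) + B * Bᵀ * (K + W * L))).trace := by
  have hMh : Mhatᵀ = Mhat := by
    rw [hMhat]; simp [Matrix.transpose_mul, Matrix.mul_assoc, hM.eq]
  have hBt : Bhatᵀ = Bᵀ * W := by
    rw [hBhat]; simp [Matrix.transpose_mul]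
  -- reassociated Sylvester equations
  have hDY' : Aᵀ * DY + DY * Ahat + (Y * DWᵀ * A * V - M * DX * Mhat) = 0 := by
    rw [← hDY]; abel
  have hDQ' : Ahatᵀ * DQ + DQ * Ahat +
      (Vᵀ * Aᵀ * DW * Qhat + Qhat * DWᵀ * A * V + Mhat * DP * Mhat) = 0 := by
    rw [← hDQ]; abel
  have hDX' : A * DX + DX * Ahatᵀ + (X * Vᵀ * Aᵀ * DW + B * Bᵀ * DW) = 0 := by
    rw [← hDX]; abel
  have hDP' : Ahat * DP + DP * Ahatᵀ +
      (DWᵀ * A * V * Phat + Phat * Vᵀ * Aᵀ * DW + DWᵀ * B * Bhatᵀ + Bhat * Bᵀ * DW) = 0 := by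
    rw [← hDP]; abel
  -- pairings
  have e1 := sylv_pair A Ahat X (B * Bhatᵀ) DY _ hX hDY'
  have e2 := sylv_pair Ahat Ahat Phat (Bhat * Bhatᵀ) DQ _ hPhat hDQ'
  have e3 := sylv_pair A Ahat DX _ R₁ (M * X * Mhat) hDX' hR₁
  have e4 := sylv_pair Ahat Ahat DP _ R₂ (Mhat * Phat * Mhat) hDP' hR₂
  simp only [Matrix.mul_add, Matrix.mul_sub, Matrix.trace_add, Matrix.trace_sub,
    Matrix.mul_assoc, hPhatsymm.eq] at e1 e2 e3 e4
  -- trace shuffles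
  have r1 : (Xᵀ * (Y * (DWᵀ * (A * V)))).trace = (DWᵀ * (A * (V * (Xᵀ * Y)))).trace := by
    rw [Matrix.trace_mul_comm Xᵀ (Y * (DWᵀ * (A * V)))]
    simp only [Matrix.mul_assoc]
    rw [Matrix.trace_mul_comm Y (DWᵀ * (A * (V * Xᵀ)))]
    simp only [Matrix.mul_assoc]
  have r2 : (Xᵀ * (M * (DX * Mhat))).trace = (DXᵀ * (M * (X * Mhat))).trace := by
    rw [← Matrix.trace_transpose (DXᵀ * (M * (X * Mhat)))]
    simp only [Matrix.transpose_mul, Matrix.transpose_transpose, Matrix.mul_assoc, hM.eq, hMh]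
    rw [Matrix.trace_mul_comm Xᵀ (M * (DX * Mhat))]
    simp only [Matrix.mul_assoc]
    rw [Matrix.trace_mul_comm M (DX * (Mhat * Xᵀ))]
    simp only [Matrix.mul_assoc]
    rw [Matrix.trace_mul_comm DX (Mhat * (Xᵀ * M))]
    simp only [Matrix.mul_assoc]
  have r3 : (Phat * (Vᵀ * (Aᵀ * (DW * Qhat)))).trace
      = (DWᵀ * (A * (V * (Phat * Qhat)))).trace := by
    rw [← Matrix.trace_transpose (Phat * (Vᵀ * (Aᵀ * (DW * Qhat))))]
    simp only [Matrix.transpose_mul, Matrix.transpose_transpose, Matrix.mul_assoc,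
      hPhatsymm.eq, hQhatsymm.eq]
    rw [Matrix.trace_mul_comm Qhat (DWᵀ * (A * (V * Phat)))]
    simp only [Matrix.mul_assoc]
  have r4 : (Phat * (Qhat * (DWᵀ * (A * V)))).trace
      = (DWᵀ * (A * (V * (Phat * Qhat)))).trace := by
    rw [Matrix.trace_mul_comm Phat (Qhat * (DWᵀ * (A * V)))]
    simp only [Matrix.mul_assoc]
    rw [Matrix.trace_mul_comm Qhat (DWᵀ * (A * (V * Phat)))]
    simp only [Matrix.mul_assoc]
  have r5 : (Phat * (Mhat * (DP * Mhat))).trace = (DPᵀ * (Mhat * (Phat * Mhat))).trace := by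
    rw [← Matrix.trace_transpose (DPᵀ * (Mhat * (Phat * Mhat)))]
    simp only [Matrix.transpose_mul, Matrix.transpose_transpose, Matrix.mul_assoc,
      hPhatsymm.eq, hMh]
    rw [Matrix.trace_mul_comm Phat (Mhat * (DP * Mhat))]
    simp only [Matrix.mul_assoc]
    rw [Matrix.trace_mul_comm Mhat (DP * (Mhat * Phat))]
    simp only [Matrix.mul_assoc]
    rw [Matrix.trace_mul_comm DP (Mhat * (Phat * Mhat))]
    simp only [Matrix.mul_assoc]
  have r6 : (R₁ᵀ * (X * (Vᵀ * (Aᵀ * DW)))).trace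
      = (DWᵀ * (A * (V * (Xᵀ * R₁)))).trace := by
    rw [← Matrix.trace_transpose (R₁ᵀ * (X * (Vᵀ * (Aᵀ * DW))))]
    simp only [Matrix.transpose_mul, Matrix.transpose_transpose, Matrix.mul_assoc]
  have r7 : (R₁ᵀ * (B * (Bᵀ * DW))).trace = (DWᵀ * (B * (Bᵀ * R₁))).trace := by
    rw [← Matrix.trace_transpose (R₁ᵀ * (B * (Bᵀ * DW)))]
    simp only [Matrix.transpose_mul, Matrix.transpose_transpose, Matrix.mul_assoc]
  have r8 : (R₂ᵀ * (DWᵀ * (A * (V * Phat)))).trace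
      = (DWᵀ * (A * (V * (Phat * R₂)))).trace := by
    rw [hR₂symm.eq, Matrix.trace_mul_comm R₂ (DWᵀ * (A * (V * Phat)))]
    simp only [Matrix.mul_assoc]
  have r9 : (R₂ᵀ * (Phat * (Vᵀ * (Aᵀ * DW)))).trace
      = (DWᵀ * (A * (V * (Phat * R₂)))).trace := by
    rw [← Matrix.trace_transpose (R₂ᵀ * (Phat * (Vᵀ * (Aᵀ * DW))))]
    simp only [Matrix.transpose_mul, Matrix.transpose_transpose, Matrix.mul_assoc,
      hR₂symm.eq, hPhatsymm.eq]
  have r10 : (R₂ᵀ * (DWᵀ * (B * Bhatᵀ))).trace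
      = (DWᵀ * (B * (Bᵀ * (W * R₂)))).trace := by
    rw [hR₂symm.eq, hBt, Matrix.trace_mul_comm R₂ (DWᵀ * (B * (Bᵀ * W)))]
    simp only [Matrix.mul_assoc]
  have r11 : (R₂ᵀ * (Bhat * (Bᵀ * DW))).trace
      = (DWᵀ * (B * (Bᵀ * (W * R₂)))).trace := by
    rw [← Matrix.trace_transpose (R₂ᵀ * (Bhat * (Bᵀ * DW)))]
    simp only [Matrix.transpose_mul, Matrix.transpose_transpose, Matrix.mul_assoc,
      hR₂symm.eq, hBt]
  -- rewrite left-hand sides of the pairings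
  have l1 : (DYᵀ * (B * Bhatᵀ)).trace = (Bhat * (Bᵀ * DY)).trace := by
    rw [← Matrix.trace_transpose (DYᵀ * (B * Bhatᵀ))]
    simp only [Matrix.transpose_mul, Matrix.transpose_transpose, Matrix.mul_assoc]
  have l2 : (DQᵀ * (Bhat * Bhatᵀ)).trace = (Bhat * (Bhatᵀ * DQ)).trace := by
    rw [← Matrix.trace_transpose (DQᵀ * (Bhat * Bhatᵀ))]
    simp only [Matrix.transpose_mul, Matrix.transpose_transpose, Matrix.mul_assoc]
  rw [l1, r1, r2] at e1
  rw [l2, r3, r4, r5] at e2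
  rw [r6, r7] at e3
  rw [r8, r9, r10, r11] at e4
  subst hK hL
  simp only [Matrix.mul_add, Matrix.add_mul, Matrix.mul_sub, Matrix.sub_mul,
    Matrix.trace_add, Matrix.trace_sub, Matrix.mul_assoc]
  linarith [e1, e2, e3, e4]
end

section
/- Let A, M ∈ ℝ^{n×n} with M symmetric, B ∈ ℝ^{n×m}, C ∈ ℝ^{1×n}, H ∈ ℝ^{n×n} symmetric, V ∈ ℝ^{n×r} with Vᵀ H V invertible, and set W := H V (Vᵀ H V)⁻¹, Â := Wᵀ A V, B̂ := Wᵀ B, Ĉ := C V, M̂ := Vᵀ M V. Let ξ ∈ ℝ^{n×r} be arbitrary and let W' ∈ ℝ^{n×r} satisfy W'ᵀ = (Vᵀ H V)⁻¹ ξᵀ H (I_n − V Wᵀ) − Wᵀ ξ Wᵀ. Let X, Y, R₁, X', Y' ∈ ℝ^{n×r} and P̂, Q̂, R₂, P̂', Q̂' ∈ ℝ^{r×r} with P̂, Q̂, R₂ symmetric, satisfying: A X + X Âᵀ + B B̂ᵀ = 0; Â P̂ + P̂ Âᵀ + B̂ B̂ᵀ = 0; Aᵀ R₁ + R₁ Â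 + M X M̂ = 0; Âᵀ R₂ + R₂ Â + M̂ P̂ M̂ = 0; Aᵀ Y' + Y' Â + Y W'ᵀ A V + Y Wᵀ A ξ − Cᵀ C ξ − M X' M̂ − M X ξᵀ M V − M X Vᵀ M ξ = 0; Âᵀ Q̂' + Q̂' Â + ξᵀ Aᵀ W Q̂ + Vᵀ Aᵀ W' Q̂ + Q̂ W'ᵀ A V + Q̂ Wᵀ A ξ + ξᵀ Cᵀ Ĉ + Ĉᵀ C ξ + ξᵀ M V P̂ M̂ + Vᵀ M ξ P̂ M̂ + M̂ P̂' M̂ + M̂ P̂ ξᵀ M V + M̂ P̂ Vᵀ M ξ = 0; A X' + X' Âᵀ + X ξᵀ Aᵀ W + X Vᵀ Aᵀ W' + B Bᵀ W' = 0; Â P̂' + P̂' Âᵀ + W'ᵀ A V P̂ + Wᵀ A ξ P̂ + P̂ ξᵀ Aᵀ W + P̂ Vᵀ Aᵀ W' + W'ᵀ B B̂ᵀ + B̂ Bᵀ W' = 0. Set K := Y − R₁ and L := Q̂ + R₂. Then 2 tr(W'ᵀ B Bᵀ (Y + W Q̂)) + 2 tr(B̂ Bᵀ Y') + tr(B̂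 B̂ᵀ Q̂') = 2 tr(W'ᵀ (A V (Xᵀ K + P̂ L) + B Bᵀ K + B B̂ᵀ L)) + 2 tr(ξᵀ (Aᵀ W (Kᵀ X + L P̂) + Cᵀ C (V P̂ − X) + 2 M V (P̂ M̂ P̂ − Xᵀ M X))). -/
open Matrix
set_option maxHeartbeats 2000000 in

/-- **Theorem 2 (algebraic content).** Directional derivative of the `H₂` error cost for
the stability-constrained reduced-order model: with `K = Y − R₁`, `L = Q̂ + R₂`,
`D J̄₂(V)[ξ] = 2 tr(W'ᵀ(A V (Xᵀ K + P̂ L) + B Bᵀ K + B B̂ᵀ L))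
 + 2 tr(ξᵀ(Aᵀ W (Kᵀ X + L P̂) + Cᵀ C (V P̂ − X) + 2 M V (P̂ M̂ P̂ − Xᵀ M X)))`. -/
theorem directional_derivative_J2 {n r m : ℕ}
    (A M : Matrix (Fin n) (Fin n) ℝ) (hM : M.IsSymm)
    (B : Matrix (Fin n) (Fin m) ℝ) (C : Matrix (Fin 1) (Fin n) ℝ)
    (H : Matrix (Fin n) (Fin n) ℝ) (hH : H.IsSymm)
    (V : Matrix (Fin n) (Fin r) ℝ) (hinv : IsUnit (Vᵀ * H * V))
    (W : Matrix (Fin n) (Fin r) ℝ) (hW : W = H * V * (Vᵀ * H * V)⁻¹)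
    (Ahat : Matrix (Fin r) (Fin r) ℝ) (Bhat : Matrix (Fin r) (Fin m) ℝ)
    (Chat : Matrix (Fin 1) (Fin r) ℝ) (Mhat : Matrix (Fin r) (Fin r) ℝ)
    (hAhat : Ahat = Wᵀ * A * V) (hBhat : Bhat = Wᵀ * B)
    (hChat : Chat = C * V) (hMhat : Mhat = Vᵀ * M * V)
    (ξ W' : Matrix (Fin n) (Fin r) ℝ)
    (hW' : W'ᵀ = (Vᵀ * H * V)⁻¹ * ξᵀ * H * (1 - V * Wᵀ) - Wᵀ * ξ * Wᵀ)
    (X Y R₁ X' Y' : Matrix (Fin n) (Fin r) ℝ)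
    (Phat Qhat R₂ Phat' Qhat' : Matrix (Fin r) (Fin r) ℝ)
    (hPhatsymm : Phat.IsSymm) (hQhatsymm : Qhat.IsSymm) (hR₂symm : R₂.IsSymm)
    (hX : A * X + X * Ahatᵀ + B * Bhatᵀ = 0)
    (hPhat : Ahat * Phat + Phat * Ahatᵀ + Bhat * Bhatᵀ = 0)
    (hR₁ : Aᵀ * R₁ + R₁ * Ahat + M * X * Mhat = 0)
    (hR₂ : Ahatᵀ * R₂ + R₂ * Ahat + Mhat * Phat * Mhat = 0)
    (hY' : Aᵀ * Y' + Y' * Ahat + Y * W'ᵀ * A * V + Y * Wᵀ * A * ξ - Cᵀ * C * ξ -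
      M * X' * Mhat - M * X * ξᵀ * M * V - M * X * Vᵀ * M * ξ = 0)
    (hQhat' : Ahatᵀ * Qhat' + Qhat' * Ahat + ξᵀ * Aᵀ * W * Qhat + Vᵀ * Aᵀ * W' * Qhat +
      Qhat * W'ᵀ * A * V + Qhat * Wᵀ * A * ξ + ξᵀ * Cᵀ * Chat + Chatᵀ * C * ξ +
      ξᵀ * M * V * Phat * Mhat + Vᵀ * M * ξ * Phat * Mhat + Mhat * Phat' * Mhat +
      Mhat * Phat * ξᵀ * M * V + Mhat * Phat * Vᵀ * M * ξ = 0)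
    (hX' : A * X' + X' * Ahatᵀ + X * ξᵀ * Aᵀ * W + X * Vᵀ * Aᵀ * W' + B * Bᵀ * W' = 0)
    (hPhat' : Ahat * Phat' + Phat' * Ahatᵀ + W'ᵀ * A * V * Phat + Wᵀ * A * ξ * Phat +
      Phat * ξᵀ * Aᵀ * W + Phat * Vᵀ * Aᵀ * W' + W'ᵀ * B * Bhatᵀ + Bhat * Bᵀ * W' = 0)
    (K : Matrix (Fin n) (Fin r) ℝ) (hK : K = Y - R₁)
    (L : Matrix (Fin r) (Fin r) ℝ) (hL : L = Qhat + R₂) :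
    2 * (W'ᵀ * (B * Bᵀ * (Y + W * Qhat))).trace +
      2 * (Bhat * Bᵀ * Y').trace + (Bhat * Bhatᵀ * Qhat').trace =
    2 * (W'ᵀ * (A * V * (Xᵀ * K + Phat * L) + B * Bᵀ * K + B * Bhatᵀ * L)).trace +
      2 * (ξᵀ * (Aᵀ * W * (Kᵀ * X + L * Phat) + Cᵀ * C * (V * Phat - X) +
        (2:ℝ) • (M * V * (Phat * Mhat * Phat - Xᵀ * M * X)))).trace := by
  have hMe : Mᵀ = M := hM
  have hPe : Phatᵀ = Phat := hPhatsymm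
  have hQe : Qhatᵀ = Qhat := hQhatsymm
  have hRe : R₂ᵀ = R₂ := hR₂symm
  have t1 := congrArg (fun Z => (Y'ᵀ * Z).trace) hX
  have t2 := congrArg (fun Z => (Xᵀ * Z).trace) hY'
  have t3 := congrArg (fun Z => (Qhat' * Z).trace) hPhat
  have t4 := congrArg (fun Z => (Phat * Z).trace) hQhat'
  have t5 := congrArg (fun Z => (R₁ᵀ * Z).trace) hX'
  have t6 := congrArg (fun Z => (X'ᵀ * Z).trace) hR₁
  have t7 := congrArg (fun Z => (R₂ * Z).trace) hPhat'
  have t8 := congrArg (fun Z => (Phat' * Z).trace) hR₂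
  simp only [hBhat, hChat, hMhat, hK, hL, Matrix.mul_add, Matrix.add_mul, Matrix.mul_sub, Matrix.sub_mul, Matrix.mul_zero, Matrix.trace_zero, Matrix.trace_add, Matrix.trace_sub, Matrix.mul_assoc, Matrix.transpose_mul, Matrix.transpose_sub, Matrix.transpose_add, Matrix.transpose_transpose, hMe, hPe, hQe, hRe, Matrix.mul_smul, Matrix.smul_mul, smul_sub, smul_add, Matrix.trace_smul, smul_eq_mul] at t1 t2 t3 t4 t5 t6 t7 t8 ⊢
  have e0 : (R₂ * (W'ᵀ * (B * (Bᵀ * (W))))).trace = (R₂ * (Wᵀ * (B * (Bᵀ * (W'))))).trace := by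
    conv_lhs => rw [← Matrix.trace_transpose]
    simp only [Matrix.transpose_mul, Matrix.transpose_sub, Matrix.transpose_add, Matrix.transpose_transpose, hMe, hPe, hQe, hRe, Matrix.mul_assoc]
    rw [show Wᵀ * (B * (Bᵀ * (W' * (R₂)))) = (Wᵀ * (B * (Bᵀ * (W')))) * (R₂) from by simp only [Matrix.mul_assoc], Matrix.trace_mul_comm]
    try simp only [Matrix.mul_assoc]
  have e1 : (W'ᵀ * (B * (Bᵀ * (W * (R₂))))).trace = (R₂ * (Wᵀ * (B * (Bᵀ * (W'))))).trace := by
    conv_lhs => rw [← Matrix.trace_transpose]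
    simp only [Matrix.transpose_mul, Matrix.transpose_sub, Matrix.transpose_add, Matrix.transpose_transpose, hMe, hPe, hQe, hRe, Matrix.mul_assoc]
  have e2 : (Phat * (ξᵀ * (Aᵀ * (W * (Qhat))))).trace = (Phat * (Qhat * (Wᵀ * (A * (ξ))))).trace := by
    conv_lhs => rw [← Matrix.trace_transpose]
    simp only [Matrix.transpose_mul, Matrix.transpose_sub, Matrix.transpose_add, Matrix.transpose_transpose, hMe, hPe, hQe, hRe, Matrix.mul_assoc]
    rw [show Qhat * (Wᵀ * (A * (ξ * (Phat)))) = (Qhat * (Wᵀ * (A * (ξ)))) * (Phat) from by simp only [Matrix.mul_assoc], Matrix.trace_mul_comm]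
    try simp only [Matrix.mul_assoc]
  have e3 : (ξᵀ * (Aᵀ * (W * (Qhat * (Phat))))).trace = (Phat * (Qhat * (Wᵀ * (A * (ξ))))).trace := by
    conv_lhs => rw [← Matrix.trace_transpose]
    simp only [Matrix.transpose_mul, Matrix.transpose_sub, Matrix.transpose_add, Matrix.transpose_transpose, hMe, hPe, hQe, hRe, Matrix.mul_assoc]
  have e4 : (R₂ * (Phat' * (Ahatᵀ))).trace = (Phat' * (Ahatᵀ * (R₂))).trace := by
    rw [show R₂ * (Phat' * (Ahatᵀ)) = (R₂) * (Phat' * (Ahatᵀ)) from by simp only [Matrix.mul_assoc], Matrix.trace_mul_comm]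
    try simp only [Matrix.mul_assoc]
  have e5 : (X'ᵀ * (M * (X * (Vᵀ * (M * (V)))))).trace = (Xᵀ * (M * (X' * (Vᵀ * (M * (V)))))).trace := by
    conv_lhs => rw [← Matrix.trace_transpose]
    simp only [Matrix.transpose_mul, Matrix.transpose_sub, Matrix.transpose_add, Matrix.transpose_transpose, hMe, hPe, hQe, hRe, Matrix.mul_assoc]
    rw [show Vᵀ * (M * (V * (Xᵀ * (M * (X'))))) = (Vᵀ * (M * (V))) * (Xᵀ * (M * (X'))) from by simp only [Matrix.mul_assoc], Matrix.trace_mul_comm]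
    try simp only [Matrix.mul_assoc]
  have e6 : (Y'ᵀ * (A * (X))).trace = (Xᵀ * (Aᵀ * (Y'))).trace := by
    conv_lhs => rw [← Matrix.trace_transpose]
    simp only [Matrix.transpose_mul, Matrix.transpose_sub, Matrix.transpose_add, Matrix.transpose_transpose, hMe, hPe, hQe, hRe, Matrix.mul_assoc]
  have e7 : (R₂ * (W'ᵀ * (A * (V * (Phat))))).trace = (R₂ * (Phat * (Vᵀ * (Aᵀ * (W'))))).trace := by
    conv_lhs => rw [← Matrix.trace_transpose]
    simp only [Matrix.transpose_mul, Matrix.transpose_sub, Matrix.transpose_add, Matrix.transpose_transpose, hMe, hPe, hQe, hRe, Matrix.mul_assoc]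
    rw [show Phat * (Vᵀ * (Aᵀ * (W' * (R₂)))) = (Phat * (Vᵀ * (Aᵀ * (W')))) * (R₂) from by simp only [Matrix.mul_assoc], Matrix.trace_mul_comm]
    try simp only [Matrix.mul_assoc]
  have e8 : (W'ᵀ * (A * (V * (Phat * (R₂))))).trace = (R₂ * (Phat * (Vᵀ * (Aᵀ * (W'))))).trace := by
    conv_lhs => rw [← Matrix.trace_transpose]
    simp only [Matrix.transpose_mul, Matrix.transpose_sub, Matrix.transpose_add, Matrix.transpose_transpose, hMe, hPe, hQe, hRe, Matrix.mul_assoc]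
  have e9 : (Xᵀ * (M * (X * (ξᵀ * (M * (V)))))).trace = (Xᵀ * (M * (X * (Vᵀ * (M * (ξ)))))).trace := by
    conv_lhs => rw [← Matrix.trace_transpose]
    simp only [Matrix.transpose_mul, Matrix.transpose_sub, Matrix.transpose_add, Matrix.transpose_transpose, hMe, hPe, hQe, hRe, Matrix.mul_assoc]
    rw [show Vᵀ * (M * (ξ * (Xᵀ * (M * (X))))) = (Vᵀ * (M * (ξ))) * (Xᵀ * (M * (X))) from by simp only [Matrix.mul_assoc], Matrix.trace_mul_comm]
    try simp only [Matrix.mul_assoc]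
  have e10 : (ξᵀ * (M * (V * (Xᵀ * (M * (X)))))).trace = (Xᵀ * (M * (X * (Vᵀ * (M * (ξ)))))).trace := by
    conv_lhs => rw [← Matrix.trace_transpose]
    simp only [Matrix.transpose_mul, Matrix.transpose_sub, Matrix.transpose_add, Matrix.transpose_transpose, hMe, hPe, hQe, hRe, Matrix.mul_assoc]
  have e11 : (Y'ᵀ * (X * (Ahatᵀ))).trace = (Xᵀ * (Y' * (Ahat))).trace := by
    conv_lhs => rw [← Matrix.trace_transpose]
    simp only [Matrix.transpose_mul, Matrix.transpose_sub, Matrix.transpose_add, Matrix.transpose_transpose, hMe, hPe, hQe, hRe, Matrix.mul_assoc]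
    rw [show Ahat * (Xᵀ * (Y')) = (Ahat) * (Xᵀ * (Y')) from by simp only [Matrix.mul_assoc], Matrix.trace_mul_comm]
    try simp only [Matrix.mul_assoc]
  have e12 : (W'ᵀ * (B * (Bᵀ * (R₁)))).trace = (R₁ᵀ * (B * (Bᵀ * (W')))).trace := by
    conv_lhs => rw [← Matrix.trace_transpose]
    simp only [Matrix.transpose_mul, Matrix.transpose_sub, Matrix.transpose_add, Matrix.transpose_transpose, hMe, hPe, hQe, hRe, Matrix.mul_assoc]
  have e13 : (Phat * (Vᵀ * (Aᵀ * (W' * (Qhat))))).trace = (Phat * (Qhat * (W'ᵀ * (A * (V))))).trace := by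
    conv_lhs => rw [← Matrix.trace_transpose]
    simp only [Matrix.transpose_mul, Matrix.transpose_sub, Matrix.transpose_add, Matrix.transpose_transpose, hMe, hPe, hQe, hRe, Matrix.mul_assoc]
    rw [show Qhat * (W'ᵀ * (A * (V * (Phat)))) = (Qhat * (W'ᵀ * (A * (V)))) * (Phat) from by simp only [Matrix.mul_assoc], Matrix.trace_mul_comm]
    try simp only [Matrix.mul_assoc]
  have e14 : (W'ᵀ * (A * (V * (Phat * (Qhat))))).trace = (Phat * (Qhat * (W'ᵀ * (A * (V))))).trace := by
    rw [show W'ᵀ * (A * (V * (Phat * (Qhat)))) = (W'ᵀ * (A * (V))) * (Phat * (Qhat)) from by simp only [Matrix.mul_assoc], Matrix.trace_mul_comm]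
    try simp only [Matrix.mul_assoc]
  have e15 : (R₂ * (Wᵀ * (A * (ξ * (Phat))))).trace = (R₂ * (Phat * (ξᵀ * (Aᵀ * (W))))).trace := by
    conv_lhs => rw [← Matrix.trace_transpose]
    simp only [Matrix.transpose_mul, Matrix.transpose_sub, Matrix.transpose_add, Matrix.transpose_transpose, hMe, hPe, hQe, hRe, Matrix.mul_assoc]
    rw [show Phat * (ξᵀ * (Aᵀ * (W * (R₂)))) = (Phat * (ξᵀ * (Aᵀ * (W)))) * (R₂) from by simp only [Matrix.mul_assoc], Matrix.trace_mul_comm]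
    try simp only [Matrix.mul_assoc]
  have e16 : (ξᵀ * (Aᵀ * (W * (R₂ * (Phat))))).trace = (R₂ * (Phat * (ξᵀ * (Aᵀ * (W))))).trace := by
    rw [show ξᵀ * (Aᵀ * (W * (R₂ * (Phat)))) = (ξᵀ * (Aᵀ * (W))) * (R₂ * (Phat)) from by simp only [Matrix.mul_assoc], Matrix.trace_mul_comm]
    try simp only [Matrix.mul_assoc]
  have e17 : (R₂ * (Ahat * (Phat'))).trace = (Phat' * (R₂ * (Ahat))).trace := by
    rw [show R₂ * (Ahat * (Phat')) = (R₂ * (Ahat)) * (Phat') from by simp only [Matrix.mul_assoc], Matrix.trace_mul_comm]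
    try simp only [Matrix.mul_assoc]
  have e18 : (Phat * (ξᵀ * (Cᵀ * (C * (V))))).trace = (Phat * (Vᵀ * (Cᵀ * (C * (ξ))))).trace := by
    conv_lhs => rw [← Matrix.trace_transpose]
    simp only [Matrix.transpose_mul, Matrix.transpose_sub, Matrix.transpose_add, Matrix.transpose_transpose, hMe, hPe, hQe, hRe, Matrix.mul_assoc]
    rw [show Vᵀ * (Cᵀ * (C * (ξ * (Phat)))) = (Vᵀ * (Cᵀ * (C * (ξ)))) * (Phat) from by simp only [Matrix.mul_assoc], Matrix.trace_mul_comm]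
    try simp only [Matrix.mul_assoc]
  have e19 : (ξᵀ * (Cᵀ * (C * (V * (Phat))))).trace = (Phat * (Vᵀ * (Cᵀ * (C * (ξ))))).trace := by
    conv_lhs => rw [← Matrix.trace_transpose]
    simp only [Matrix.transpose_mul, Matrix.transpose_sub, Matrix.transpose_add, Matrix.transpose_transpose, hMe, hPe, hQe, hRe, Matrix.mul_assoc]
  have e20 : (ξᵀ * (Aᵀ * (W * (Yᵀ * (X))))).trace = (Xᵀ * (Y * (Wᵀ * (A * (ξ))))).trace := by
    conv_lhs => rw [← Matrix.trace_transpose]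
    simp only [Matrix.transpose_mul, Matrix.transpose_sub, Matrix.transpose_add, Matrix.transpose_transpose, hMe, hPe, hQe, hRe, Matrix.mul_assoc]
  have e21 : (ξᵀ * (Aᵀ * (W * (R₁ᵀ * (X))))).trace = (R₁ᵀ * (X * (ξᵀ * (Aᵀ * (W))))).trace := by
    rw [show ξᵀ * (Aᵀ * (W * (R₁ᵀ * (X)))) = (ξᵀ * (Aᵀ * (W))) * (R₁ᵀ * (X)) from by simp only [Matrix.mul_assoc], Matrix.trace_mul_comm]
    try simp only [Matrix.mul_assoc]
  have e22 : (Qhat' * (Ahat * (Phat))).trace = (Phat * (Qhat' * (Ahat))).trace := by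
    rw [show Qhat' * (Ahat * (Phat)) = (Qhat' * (Ahat)) * (Phat) from by simp only [Matrix.mul_assoc], Matrix.trace_mul_comm]
    try simp only [Matrix.mul_assoc]
  have e23 : (Phat * (Vᵀ * (M * (V * (Phat * (ξᵀ * (M * (V)))))))).trace = (Phat * (Vᵀ * (M * (V * (Phat * (Vᵀ * (M * (ξ)))))))).trace := by
    conv_lhs => rw [← Matrix.trace_transpose]
    simp only [Matrix.transpose_mul, Matrix.transpose_sub, Matrix.transpose_add, Matrix.transpose_transpose, hMe, hPe, hQe, hRe, Matrix.mul_assoc]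
    rw [show Vᵀ * (M * (ξ * (Phat * (Vᵀ * (M * (V * (Phat))))))) = (Vᵀ * (M * (ξ))) * (Phat * (Vᵀ * (M * (V * (Phat))))) from by simp only [Matrix.mul_assoc], Matrix.trace_mul_comm]
    try simp only [Matrix.mul_assoc]
  have e24 : (Phat * (Vᵀ * (M * (ξ * (Phat * (Vᵀ * (M * (V)))))))).trace = (Phat * (Vᵀ * (M * (V * (Phat * (Vᵀ * (M * (ξ)))))))).trace := by
    rw [show Phat * (Vᵀ * (M * (ξ * (Phat * (Vᵀ * (M * (V))))))) = (Phat * (Vᵀ * (M * (ξ)))) * (Phat * (Vᵀ * (M * (V)))) from by simp only [Matrix.mul_assoc], Matrix.trace_mul_comm]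
    try simp only [Matrix.mul_assoc]
  have e25 : (Phat * (ξᵀ * (M * (V * (Phat * (Vᵀ * (M * (V)))))))).trace = (Phat * (Vᵀ * (M * (V * (Phat * (Vᵀ * (M * (ξ)))))))).trace := by
    conv_lhs => rw [← Matrix.trace_transpose]
    simp only [Matrix.transpose_mul, Matrix.transpose_sub, Matrix.transpose_add, Matrix.transpose_transpose, hMe, hPe, hQe, hRe, Matrix.mul_assoc]
    rw [show Vᵀ * (M * (V * (Phat * (Vᵀ * (M * (ξ * (Phat))))))) = (Vᵀ * (M * (V * (Phat * (Vᵀ * (M * (ξ))))))) * (Phat) from by simp only [Matrix.mul_assoc], Matrix.trace_mul_comm]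
    try simp only [Matrix.mul_assoc]
  have e26 : (ξᵀ * (M * (V * (Phat * (Vᵀ * (M * (V * (Phat)))))))).trace = (Phat * (Vᵀ * (M * (V * (Phat * (Vᵀ * (M * (ξ)))))))).trace := by
    conv_lhs => rw [← Matrix.trace_transpose]
    simp only [Matrix.transpose_mul, Matrix.transpose_sub, Matrix.transpose_add, Matrix.transpose_transpose, hMe, hPe, hQe, hRe, Matrix.mul_assoc]
  have e27 : (X'ᵀ * (Aᵀ * (R₁))).trace = (R₁ᵀ * (A * (X'))).trace := by
    conv_lhs => rw [← Matrix.trace_transpose]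
    simp only [Matrix.transpose_mul, Matrix.transpose_sub, Matrix.transpose_add, Matrix.transpose_transpose, hMe, hPe, hQe, hRe, Matrix.mul_assoc]
  have e28 : (Phat' * (Vᵀ * (M * (V * (Phat * (Vᵀ * (M * (V)))))))).trace = (Phat * (Vᵀ * (M * (V * (Phat' * (Vᵀ * (M * (V)))))))).trace := by
    rw [show Phat' * (Vᵀ * (M * (V * (Phat * (Vᵀ * (M * (V))))))) = (Phat' * (Vᵀ * (M * (V)))) * (Phat * (Vᵀ * (M * (V)))) from by simp only [Matrix.mul_assoc], Matrix.trace_mul_comm]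
    try simp only [Matrix.mul_assoc]
  have e29 : (Y'ᵀ * (B * (Bᵀ * (W)))).trace = (Wᵀ * (B * (Bᵀ * (Y')))).trace := by
    conv_lhs => rw [← Matrix.trace_transpose]
    simp only [Matrix.transpose_mul, Matrix.transpose_sub, Matrix.transpose_add, Matrix.transpose_transpose, hMe, hPe, hQe, hRe, Matrix.mul_assoc]
  have e30 : (Xᵀ * (Y * (W'ᵀ * (A * (V))))).trace = (W'ᵀ * (A * (V * (Xᵀ * (Y))))).trace := by
    rw [show Xᵀ * (Y * (W'ᵀ * (A * (V)))) = (Xᵀ * (Y)) * (W'ᵀ * (A * (V))) from by simp only [Matrix.mul_assoc], Matrix.trace_mul_comm]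
    try simp only [Matrix.mul_assoc]
  have e31 : (X'ᵀ * (R₁ * (Ahat))).trace = (R₁ᵀ * (X' * (Ahatᵀ))).trace := by
    conv_lhs => rw [← Matrix.trace_transpose]
    simp only [Matrix.transpose_mul, Matrix.transpose_sub, Matrix.transpose_add, Matrix.transpose_transpose, hMe, hPe, hQe, hRe, Matrix.mul_assoc]
    rw [show Ahatᵀ * (R₁ᵀ * (X')) = (Ahatᵀ) * (R₁ᵀ * (X')) from by simp only [Matrix.mul_assoc], Matrix.trace_mul_comm]
    try simp only [Matrix.mul_assoc]
  have e32 : (Wᵀ * (B * (Bᵀ * (W * (Qhat'))))).trace = (Qhat' * (Wᵀ * (B * (Bᵀ * (W))))).trace := by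
    rw [show Wᵀ * (B * (Bᵀ * (W * (Qhat')))) = (Wᵀ * (B * (Bᵀ * (W)))) * (Qhat') from by simp only [Matrix.mul_assoc], Matrix.trace_mul_comm]
    try simp only [Matrix.mul_assoc]
  have e33 : (W'ᵀ * (A * (V * (Xᵀ * (R₁))))).trace = (R₁ᵀ * (X * (Vᵀ * (Aᵀ * (W'))))).trace := by
    conv_lhs => rw [← Matrix.trace_transpose]
    simp only [Matrix.transpose_mul, Matrix.transpose_sub, Matrix.transpose_add, Matrix.transpose_transpose, hMe, hPe, hQe, hRe, Matrix.mul_assoc]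
  have e34 : (ξᵀ * (Cᵀ * (C * (X)))).trace = (Xᵀ * (Cᵀ * (C * (ξ)))).trace := by
    conv_lhs => rw [← Matrix.trace_transpose]
    simp only [Matrix.transpose_mul, Matrix.transpose_sub, Matrix.transpose_add, Matrix.transpose_transpose, hMe, hPe, hQe, hRe, Matrix.mul_assoc]
  have e35 : (Qhat' * (Phat * (Ahatᵀ))).trace = (Phat * (Ahatᵀ * (Qhat'))).trace := by
    rw [show Qhat' * (Phat * (Ahatᵀ)) = (Qhat') * (Phat * (Ahatᵀ)) from by simp only [Matrix.mul_assoc], Matrix.trace_mul_comm]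
    try simp only [Matrix.mul_assoc]
  linarith [t1, t2, t3, t4, t5, t6, t7, t8, e0, e1, e2, e3, e4, e5, e6, e7, e8, e9, e10, e11, e12, e13, e14, e15, e16, e17, e18, e19, e20, e21, e22, e23, e24, e25, e26, e27, e28, e29, e30, e31, e32, e33, e34, e35]
end
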